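/- arXiv:1808.04817 — 8 statements merged into one kernel-verified Lean document; each statement's English description precedes it below -/
import Mathlib

section
/- If f : 𝕋 → 𝕋 is a sense-preserving circle homeomorphism whose Fourier support {n ∈ ℤ : f̂(n) ≠ 0} is a bounded subset of ℤ, then f is a rotation, i.e., there exists c ∈ 𝕋 such that f(z) = c·z for all z ∈ 𝕋. -/
/-! Transport `f` to the continuous unimodular function `g` on `ℝ/2πℤ`. Bounded Fourier support
makes `g` a trigonometric polynomial `∑_{a ≤ n ≤ b} cₙ eₙ` with `c_a, c_b ≠ 0`; in `g * conj g = 1`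
the frequency `b - a` occurs only as `c_b * conj c_a`, so `a = b` and `g = c e_a`. Uniqueness of
lifts through `θ ↦ exp (θ I)` makes the lift `F` of `f` affine of slope `a`, and the degree-one
condition `F (θ + 2π) = F θ + 2π` forces `a = 1`. -/

open Complex MeasureTheory intervalIntegral ComplexConjugate

noncomputable def fCoeff (f : ℂ → ℂ) (n : ℤ) : ℂ :=
  (1 / (2 * Real.pi) : ℂ) * ∫ θ in (0:ℝ)..(2 * Real.pi),
    f (Complex.exp (θ * Complex.I)) * Complex.exp (-(n : ℂ) * θ * Complex.I)

/-- A sense-preserving homeomorphism of the unit circle, described via a continuous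
strictly increasing degree-one lift. -/
def CirclePosHomeo (f : ℂ → ℂ) : Prop :=
  ∃ F : ℝ → ℝ, Continuous F ∧ StrictMono F ∧
    (∀ θ, F (θ + 2 * Real.pi) = F θ + 2 * Real.pi) ∧
    ∀ θ : ℝ, f (Complex.exp (θ * Complex.I)) = Complex.exp (F θ * Complex.I)

section TrigPolynomial
variable {T : ℝ}

theorem sum_smul_fourier_mul_conj (s : Finset ℤ) (c : ℤ → ℂ) (x : AddCircle T) :
    (∑ n ∈ s, c n • fourier n x) * conj (∑ n ∈ s, c n • fourier n x) =
      ∑ p ∈ s ×ˢ s, (c p.1 * conj (c p.2)) • fourier (p.1 - p.2) x := by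
  simp only [map_sum, Finset.sum_mul_sum, ← Finset.sum_product', sub_eq_add_neg, fourier_add,
    fourier_neg, smul_eq_mul, map_mul]
  exact Finset.sum_congr rfl fun _ _ => by ring

variable [Fact (0 < T)]

theorem fourierCoeff_sum_smul_fourier {ι : Type*} (s : Finset ι) (d : ι → ℂ) (φ : ι → ℤ)
    (k : ℤ) :
    fourierCoeff (fun x : AddCircle T => ∑ i ∈ s, d i • fourier (φ i) x) k =
      ∑ i ∈ s with φ i = k, d i := by
  have hintegrable : ∀ i ∈ s,
      Integrable (fun x : AddCircle T => d i • fourier (φ i) x) AddCircle.haarAddCircle :=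
    fun i _ => ((fourier (φ i)).continuous.const_smul (d i)).integrable_of_hasCompactSupport
      (HasCompactSupport.of_compactSpace _)
  rw [← Finset.sum_fn, fourierCoeff.sum s _ hintegrable, Finset.sum_apply, Finset.sum_filter]
  refine Finset.sum_congr rfl fun i _ => ?_
  rw [show (fun x : AddCircle T => d i • fourier (φ i) x) = d i • ⇑(fourier (φ i)) from rfl,
    fourierCoeff.const_smul, fourierCoeff_fourier, Pi.single_apply]
  simp [eq_comm]

theorem eq_of_norm_sum_smul_fourier_eq_one {a b : ℤ} (hab : a ≤ b) {c : ℤ → ℂ} (ha : c a ≠ 0)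
    (hb : c b ≠ 0) (h : ∀ x : AddCircle T, ‖∑ n ∈ Finset.Icc a b, c n • fourier n x‖ = 1) :
    a = b := by
  by_contra hne
  have hnormSq : (fun x : AddCircle T => ∑ p ∈ Finset.Icc a b ×ˢ Finset.Icc a b,
      (c p.1 * conj (c p.2)) • fourier (p.1 - p.2) x) =
      ⇑(fourier 0) := by
    ext x
    rw [← sum_smul_fourier_mul_conj, mul_conj, normSq_eq_norm_sq, h x, fourier_zero]
    norm_num
  have hpairs : {p ∈ Finset.Icc a b ×ˢ Finset.Icc a b | p.1 - p.2 = b - a} = {(b, a)} := by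
    ext ⟨n, m⟩
    simp only [Finset.mem_filter, Finset.mem_product, Finset.mem_Icc, Finset.mem_singleton,
      Prod.mk.injEq]
    omega
  have hcoeff := congr_arg (fourierCoeff · (b - a)) hnormSq
  simp only [fourierCoeff_sum_smul_fourier, hpairs, Finset.sum_singleton, fourierCoeff_fourier,
    Pi.single_apply, if_neg (sub_ne_zero.mpr (Ne.symm hne))] at hcoeff
  exact mul_ne_zero hb ((map_ne_zero _).mpr ha) hcoeff

theorem sum_fourierCoeff_smul_fourier_eq (g : C(AddCircle T, ℂ)) {s : Finset ℤ}
    (hs : ∀ n ∉ s, fourierCoeff g n = 0) (x : AddCircle T) :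
    ∑ n ∈ s, fourierCoeff g n • fourier n x = g x :=
  ((hasSum_sum_of_ne_finset_zero fun n hn => by rw [hs n hn, zero_smul]).unique
    (has_pointwise_sum_fourier_series_of_summable (summable_of_ne_finset_zero hs) x))

theorem exists_eq_smul_fourier_of_norm_eq_one (g : C(AddCircle T, ℂ)) (hg : ∀ x, ‖g x‖ = 1)
    (hbddAbove : BddAbove {n | fourierCoeff g n ≠ 0})
    (hbddBelow : BddBelow {n | fourierCoeff g n ≠ 0}) :
    ∃ n : ℤ, ∀ x, g x = fourierCoeff g n • fourier n x := by
  have hne : ∃ n, fourierCoeff g n ≠ 0 := by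
    by_contra! h
    have := hg 0
    rw [← sum_fourierCoeff_smul_fourier_eq g (s := ∅) (fun n _ => h n)] at this
    simp at this
  obtain ⟨b, hb, hb_max⟩ := Int.exists_greatest_of_bdd hbddAbove hne
  obtain ⟨a, ha, ha_min⟩ := Int.exists_least_of_bdd hbddBelow hne
  have hsupp : ∀ n ∉ Finset.Icc a b, fourierCoeff g n = 0 := fun n hn => by
    by_contra h
    exact hn (Finset.mem_Icc.mpr ⟨ha_min n h, hb_max n h⟩)
  have hg_sum := sum_fourierCoeff_smul_fourier_eq g hsupp
  obtain rfl : a = b := eq_of_norm_sum_smul_fourier_eq_one (ha_min b hb) ha hb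
    fun x => by rw [hg_sum, hg]
  exact ⟨a, fun x => by simpa using (hg_sum x).symm⟩

end TrigPolynomial

open AddCircle
open scoped Real

instance : Fact (0 < 2 * π) := ⟨Real.two_pi_pos⟩

theorem toCircle_coe_two_pi (θ : ℝ) : (toCircle (θ : AddCircle (2 * π)) : ℂ) = exp (θ * I) := by
  rw [toCircle_apply_mk, Circle.coe_exp, div_self Real.two_pi_pos.ne', one_mul]

theorem fourier_coe_two_pi (n : ℤ) (θ : ℝ) :
    fourier n (θ : AddCircle (2 * π)) = exp (n * θ * I) := by
  rw [fourier_coe_apply]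
  congr 1
  push_cast
  field_simp

theorem fCoeff_eq_fourierCoeff (f : ℂ → ℂ) (n : ℤ) :
    fCoeff f n = fourierCoeff (fun x : AddCircle (2 * π) => f (toCircle x)) n := by
  rw [fourierCoeff_eq_intervalIntegral _ n 0, zero_add, fCoeff, real_smul]
  push_cast
  congr 1
  refine integral_congr fun θ _ => ?_
  simp only [fourier_coe_two_pi, toCircle_coe_two_pi, smul_eq_mul]
  push_cast
  ring

theorem eq_mul_add_of_exp_eq {F : ℝ → ℝ} (hF : Continuous F) {a : ℝ}
    (h : ∀ θ, exp (F θ * I) = exp (F 0 * I) * exp (a * θ * I)) (θ : ℝ) :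
    F θ = a * θ + F 0 := by
  refine congr_fun (Circle.isCoveringMap_exp.eq_of_comp_eq (g₂ := fun θ => a * θ + F 0) hF
    (by fun_prop) (funext fun θ => ?_) 0 (by simp)) θ
  apply Circle.ext
  simp only [Function.comp_apply, Circle.coe_exp, h θ, ← exp_add]
  push_cast
  ring_nf

theorem CirclePosHomeo.continuous_comp_toCircle {f : ℂ → ℂ} (hf : CirclePosHomeo f) :
    Continuous fun x : AddCircle (2 * π) => f (toCircle x) := by
  obtain ⟨F, hFc, -, -, hFf⟩ := hf
  rw [(QuotientAddGroup.isQuotientMap_mk _).continuous_iff]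
  simpa [Function.comp_def, toCircle_coe_two_pi, hFf] using by fun_prop

/-- a circle homeomorphism with bounded Fourier support is a rotation. -/
theorem circle_homeo_bounded_support_is_rotation
    (f : ℂ → ℂ) (hf : CirclePosHomeo f)
    (hbdd : BddAbove {n : ℤ | fCoeff f n ≠ 0} ∧ BddBelow {n : ℤ | fCoeff f n ≠ 0}) :
    ∃ c : ℂ, ‖c‖ = 1 ∧ ∀ z : ℂ, ‖z‖ = 1 → f z = c * z := by
  have hg_cont := hf.continuous_comp_toCircle
  obtain ⟨F, hFc, -, hFp, hFf⟩ := hf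
  let g : C(AddCircle (2 * π), ℂ) := ⟨_, hg_cont⟩
  have hg : ∀ θ : ℝ, g (θ : AddCircle (2 * π)) = exp (F θ * I) := fun θ => by
    simp [g, toCircle_coe_two_pi, hFf]
  have hg_norm : ∀ x, ‖g x‖ = 1 := fun x => by
    induction x using QuotientAddGroup.induction_on with
    | H θ => rw [hg, norm_exp_ofReal_mul_I]
  simp only [fCoeff_eq_fourierCoeff] at hbdd
  obtain ⟨n, hn⟩ := exists_eq_smul_fourier_of_norm_eq_one g hg_norm hbdd.1 hbdd.2
  have hF_affine := eq_mul_add_of_exp_eq hFc (a := n) fun θ => by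
    have h0 := hn 0
    rw [← QuotientAddGroup.mk_zero, hg, fourier_coe_two_pi] at h0
    rw [← hg, hn, fourier_coe_two_pi, h0, smul_eq_mul]
    simp
  obtain rfl : n = 1 := by
    have h := hFp 0
    rw [hF_affine, zero_add] at h
    have : (n : ℝ) * (2 * π) = 1 * (2 * π) := by linarith
    exact_mod_cast mul_right_cancel₀ Real.two_pi_pos.ne' this
  refine ⟨exp (F 0 * I), norm_exp_ofReal_mul_I _, fun z hz => ?_⟩
  rw [← norm_mul_exp_arg_mul_I z, hz, ofReal_one, one_mul, hFf, hF_affine, ← exp_add]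
  push_cast
  ring_nf
end

section
/- For every positive harmonic function h on the open unit disk 𝔻 and all z, w ∈ 𝔻, one has |h(z) − h(w)| ≤ (2|z − w| / ((1 − |z|)(1 − |w|))) · h(0). -/
/-!
A positive harmonic `h` on the disk is the real part of a holomorphic `F` with `0 < Re F`.
Schwarz's lemma for `(F - F 0) / (F + conj (F 0))`, which maps the disk to itself and `0` to `0`,
gives Harnack's inequality `Re F ζ * (1 - |ζ|) ≤ Re F 0 * (1 + |ζ|)`; precomposing that map
with the disk automorphism sending `0` to `ζ` gives the Schwarz–Pick bound
`|F' ζ| (1 - |ζ|²) ≤ 2 Re F ζ`. Together they give `|F' ζ| ≤ 2 h 0 / (1 - |ζ|)²`, and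
integrating along the segment from `z` to `w` yields the claim.
-/

open Complex MeasureTheory

/-- The Laplacian of `h : ℂ → ℝ` within a set, computed from the second iterated
derivative in the directions `1` and `I`. -/
noncomputable def lapWithin (h : ℂ → ℝ) (s : Set ℂ) (z : ℂ) : ℝ :=
  iteratedFDerivWithin ℝ 2 h s z ![1, 1] + iteratedFDerivWithin ℝ 2 h s z ![Complex.I, Complex.I]

open Metric InnerProductSpace
open scoped ComplexConjugate

theorem harmonicOnNhd_of_lapWithin_eq_zero {h : ℂ → ℝ} {s : Set ℂ} (hs : IsOpen s)
    (hsmooth : ContDiffOn ℝ 2 h s) (hharm : ∀ z ∈ s, lapWithin h s z = 0) :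
    HarmonicOnNhd h s := by
  intro x hx
  refine ⟨hsmooth.contDiffAt (hs.mem_nhds hx), ?_⟩
  filter_upwards [hs.mem_nhds hx] with y hy
  rw [Pi.zero_apply, ← hharm y hy, laplacian_eq_iteratedFDeriv_complexPlane, lapWithin,
    iteratedFDerivWithin_of_isOpen 2 hs hy]

theorem add_conj_ne_zero_of_re_pos {a w : ℂ} (ha : 0 < a.re) (hw : 0 < w.re) :
    w + conj a ≠ 0 := fun h0 => by
  have := congrArg re h0
  simp only [add_re, conj_re, zero_re] at this
  linarith

theorem re_mul_one_sub_le_of_norm_sub_div_add_conj_le {a w : ℂ} {ρ : ℝ} (ha : 0 < a.re)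
    (hw : 0 < w.re) (hρ : ρ ≤ 1) (hwa : ‖(w - a) / (w + conj a)‖ ≤ ρ) :
    w.re * (1 - ρ) ≤ a.re * (1 + ρ) := by
  have hden : 0 < ‖w + conj a‖ := norm_pos_iff.2 (add_conj_ne_zero_of_re_pos ha hw)
  rw [norm_div, div_le_iff₀ hden] at hwa
  have hsq : ‖w - a‖ ^ 2 ≤ ρ ^ 2 * ‖w + conj a‖ ^ 2 := by
    rw [← mul_pow]; exact pow_le_pow_left₀ (norm_nonneg _) hwa 2
  simp only [Complex.sq_norm, normSq_apply, sub_re, sub_im, add_re, add_im, conj_re, conj_im] at hsq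
  have hρ0 : 0 ≤ ρ := nonneg_of_mul_nonneg_left ((norm_nonneg _).trans hwa) hden
  have hre : (w.re - a.re) ^ 2 ≤ (ρ * (w.re + a.re)) ^ 2 := by
    nlinarith [mul_nonneg (sq_nonneg (w.im - a.im))
      (mul_nonneg (sub_nonneg.2 hρ) (by linarith : 0 ≤ 1 + ρ))]
  have := abs_le_of_sq_le_sq' hre (by positivity)
  linarith [this.2]

theorem norm_sub_div_add_conj_lt_one {a w : ℂ} (ha : 0 < a.re) (hw : 0 < w.re) :
    ‖(w - a) / (w + conj a)‖ < 1 := by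
  have hlt : ‖w - a‖ ^ 2 < ‖w + conj a‖ ^ 2 := by
    simp only [Complex.sq_norm, normSq_apply, sub_re, sub_im, add_re, add_im, conj_re, conj_im]
    nlinarith [mul_pos hw ha]
  rw [norm_div, div_lt_one (norm_pos_iff.2 (add_conj_ne_zero_of_re_pos ha hw))]
  exact lt_of_pow_lt_pow_left₀ 2 (norm_nonneg _) hlt

theorem one_add_conj_mul_ne_zero {ζ x : ℂ} (hζ : ‖ζ‖ < 1) (hx : ‖x‖ < 1) :
    1 + conj ζ * x ≠ 0 := fun h0 => by
  have h1 : ‖conj ζ * x‖ < 1 := by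
    rw [norm_mul, RCLike.norm_conj]
    nlinarith [norm_nonneg x, norm_nonneg ζ]
  rw [eq_neg_of_add_eq_zero_right h0, norm_neg, norm_one] at h1
  exact lt_irrefl _ h1

theorem norm_add_div_one_add_conj_mul_lt_one {ζ x : ℂ} (hζ : ‖ζ‖ < 1) (hx : ‖x‖ < 1) :
    ‖(x + ζ) / (1 + conj ζ * x)‖ < 1 := by
  have hx2 : normSq x < 1 := by rw [← Complex.sq_norm]; nlinarith [norm_nonneg x]
  have hζ2 : normSq ζ < 1 := by rw [← Complex.sq_norm]; nlinarith [norm_nonneg ζ]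
  -- `‖1 + conj ζ * x‖² - ‖x + ζ‖² = (1 - ‖x‖²) (1 - ‖ζ‖²)`
  have hlt : ‖x + ζ‖ ^ 2 < ‖1 + conj ζ * x‖ ^ 2 := by
    simp only [normSq_apply] at hx2 hζ2
    simp only [Complex.sq_norm, normSq_apply, add_re, add_im, mul_re, mul_im, one_re, one_im,
      conj_re, conj_im]
    nlinarith [mul_pos (sub_pos.2 hx2) (sub_pos.2 hζ2)]
  rw [norm_div, div_lt_one (norm_pos_iff.2 (one_add_conj_mul_ne_zero hζ hx))]
  exact lt_of_pow_lt_pow_left₀ 2 (norm_nonneg _) hlt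

section CaratheodoryClass

variable {f : ℂ → ℂ}

theorem differentiableOn_sub_div_add_conj (hf : DifferentiableOn ℂ f (ball 0 1))
    (hpos : ∀ z ∈ ball (0 : ℂ) 1, 0 < (f z).re) {a : ℂ} (ha : 0 < a.re) :
    DifferentiableOn ℂ (fun x => (f x - a) / (f x + conj a)) (ball 0 1) :=
  (hf.sub_const a).div (hf.add_const _) fun x hx => add_conj_ne_zero_of_re_pos ha (hpos x hx)

theorem mapsTo_sub_div_add_conj (hpos : ∀ z ∈ ball (0 : ℂ) 1, 0 < (f z).re) {a : ℂ}
    (ha : 0 < a.re) :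
    Set.MapsTo (fun x => (f x - a) / (f x + conj a)) (ball 0 1) (closedBall 0 1) :=
  fun x hx => mem_closedBall_zero_iff.2 (norm_sub_div_add_conj_lt_one ha (hpos x hx)).le

theorem re_mul_one_sub_norm_le (hf : DifferentiableOn ℂ f (ball 0 1))
    (hpos : ∀ z ∈ ball (0 : ℂ) 1, 0 < (f z).re) {z : ℂ} (hz : z ∈ ball (0 : ℂ) 1) :
    (f z).re * (1 - ‖z‖) ≤ (f 0).re * (1 + ‖z‖) := by
  have ha := hpos 0 (mem_ball_self one_pos)
  have hschwarz : ‖(f z - f 0) / (f z + conj (f 0))‖ ≤ ‖z‖ :=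
    Complex.norm_le_norm_of_mapsTo_ball (differentiableOn_sub_div_add_conj hf hpos ha)
      (mapsTo_sub_div_add_conj hpos ha) (by simp) (mem_ball_zero_iff.1 hz)
  exact re_mul_one_sub_le_of_norm_sub_div_add_conj_le ha (hpos z hz)
    (mem_ball_zero_iff.1 hz).le hschwarz

theorem norm_deriv_mul_one_sub_sq_le (hf : DifferentiableOn ℂ f (ball 0 1))
    (hpos : ∀ z ∈ ball (0 : ℂ) 1, 0 < (f z).re) {ζ : ℂ} (hζ : ζ ∈ ball (0 : ℂ) 1) :
    ‖deriv f ζ‖ * (1 - ‖ζ‖ ^ 2) ≤ 2 * (f ζ).re := by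
  have hζ1 := mem_ball_zero_iff.1 hζ
  have ha : 0 < (f ζ).re := hpos ζ hζ
  set m : ℂ → ℂ := fun x => (x + ζ) / (1 + conj ζ * x)
  have hm : Set.MapsTo m (ball 0 1) (ball 0 1) := fun x hx =>
    mem_ball_zero_iff.2 (norm_add_div_one_add_conj_mul_lt_one hζ1 (mem_ball_zero_iff.1 hx))
  have hmd : DifferentiableOn ℂ m (ball 0 1) :=
    (differentiableOn_id.add_const ζ).div ((differentiableOn_id.const_mul _).const_add 1)
      fun x hx => one_add_conj_mul_ne_zero hζ1 (mem_ball_zero_iff.1 hx)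
  have hm0 : m 0 = ζ := by simp [m]
  have hm' : HasDerivAt m (1 - ζ * conj ζ) 0 :=
    (((hasDerivAt_id (0 : ℂ)).add_const ζ).div
      (((hasDerivAt_id (0 : ℂ)).const_mul (conj ζ)).const_add 1) (by simp)).congr_deriv (by simp)
  set g : ℂ → ℂ := fun x => (f x - f ζ) / (f x + conj (f ζ))
  have hg' : HasDerivAt g ((f ζ + conj (f ζ))⁻¹ * deriv f ζ) (m 0) := by
    have hf' : HasDerivAt f (deriv f ζ) ζ :=
      (hf.differentiableAt (isOpen_ball.mem_nhds hζ)).hasDerivAt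
    have hne := add_conj_ne_zero_of_re_pos ha ha
    rw [hm0]
    refine ((hf'.sub_const _).div (hf'.add_const _) hne).congr_deriv ?_
    field_simp
    ring
  have hschwarz : ‖deriv (g ∘ m) 0‖ ≤ 1 := by
    refine Complex.norm_deriv_le_one_of_mapsTo_ball
      ((differentiableOn_sub_div_add_conj hf hpos ha).comp hmd hm) ?_ one_pos
    simpa [Function.comp_apply, hm0, g] using (mapsTo_sub_div_add_conj hpos ha).comp hm
  rw [(hg'.comp 0 hm').deriv, norm_mul, norm_mul, add_conj, norm_inv, norm_real,
    Real.norm_of_nonneg (by positivity), mul_conj, ← Complex.sq_norm, ← ofReal_one,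
    ← ofReal_sub, norm_real, Real.norm_of_nonneg (by nlinarith [norm_nonneg ζ]), mul_assoc,
    inv_mul_le_iff₀ (by positivity), mul_one] at hschwarz
  exact hschwarz

theorem norm_deriv_le_of_re_pos (hf : DifferentiableOn ℂ f (ball 0 1))
    (hpos : ∀ z ∈ ball (0 : ℂ) 1, 0 < (f z).re) {ζ : ℂ} (hζ : ζ ∈ ball (0 : ℂ) 1) :
    ‖deriv f ζ‖ ≤ 2 * (f 0).re / (1 - ‖ζ‖) ^ 2 := by
  have hζ1 := mem_ball_zero_iff.1 hζ
  have hpick := norm_deriv_mul_one_sub_sq_le hf hpos hζ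
  have hharnack := re_mul_one_sub_norm_le hf hpos hζ
  rw [le_div_iff₀ (by nlinarith [norm_nonneg ζ])]
  refine le_of_mul_le_mul_right ?_ (by positivity : 0 < 1 + ‖ζ‖)
  calc ‖deriv f ζ‖ * (1 - ‖ζ‖) ^ 2 * (1 + ‖ζ‖)
      = ‖deriv f ζ‖ * (1 - ‖ζ‖ ^ 2) * (1 - ‖ζ‖) := by ring
    _ ≤ 2 * (f ζ).re * (1 - ‖ζ‖) := by gcongr
    _ ≤ 2 * (f 0).re * (1 + ‖ζ‖) := by linarith

end CaratheodoryClass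

theorem norm_add_smul_sub_le {E : Type*} [SeminormedAddCommGroup E] [NormedSpace ℝ E]
    (z w : E) {t : ℝ} (ht : t ∈ Set.Icc (0 : ℝ) 1) :
    ‖z + t • (w - z)‖ ≤ (1 - t) * ‖z‖ + t * ‖w‖ := by
  have hγ : z + t • (w - z) = (1 - t) • z + t • w := by module
  rw [hγ]
  refine (norm_add_le _ _).trans_eq ?_
  rw [norm_smul, norm_smul, Real.norm_of_nonneg ht.1, Real.norm_of_nonneg (sub_nonneg.2 ht.2)]

theorem hasDerivAt_div_mul_affine {A B t : ℝ} (hA : A ≠ 0)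
    (ht : (1 - t) * A + t * B ≠ 0) :
    HasDerivAt (fun s => s / (A * ((1 - s) * A + s * B))) (((1 - t) * A + t * B) ^ 2)⁻¹ t := by
  have hden : HasDerivAt (fun s => A * ((1 - s) * A + s * B)) (A * (B - A)) t := by
    have := (((hasDerivAt_id t).const_sub 1).mul_const A).add ((hasDerivAt_id t).mul_const B)
    exact (this.const_mul A).congr_deriv (by ring)
  refine ((hasDerivAt_id t).div hden (mul_ne_zero hA ht)).congr_deriv ?_
  simp only [id]
  field_simp
  ring

theorem norm_sub_le_of_norm_deriv_le_div_affine_sq {E : Type*} [NormedAddCommGroup E]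
    [NormedSpace ℝ E] {g g' : ℝ → E} {A B K : ℝ} (hA : 0 < A) (hB : 0 < B)
    (hg : ∀ t ∈ Set.Icc (0 : ℝ) 1, HasDerivAt g (g' t) t)
    (hg' : ∀ t ∈ Set.Icc (0 : ℝ) 1, ‖g' t‖ ≤ K / ((1 - t) * A + t * B) ^ 2) :
    ‖g 1 - g 0‖ ≤ K / (A * B) := by
  set ℓ : ℝ → ℝ := fun t => (1 - t) * A + t * B
  have hℓ : ∀ t ∈ Set.Icc (0 : ℝ) 1, 0 < ℓ t := fun t ht =>
    convex_Ioi (0 : ℝ) hA hB (sub_nonneg.2 ht.2) ht.1 (sub_add_cancel 1 t)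
  -- comparison function: it vanishes at `0` and equals `K / (A * B)` at `1`
  have hβ : ∀ t ∈ Set.Icc (0 : ℝ) 1,
      HasDerivAt (fun t => K * (t / (A * ℓ t))) (K * (ℓ t ^ 2)⁻¹) t :=
    fun t ht => (hasDerivAt_div_mul_affine hA.ne' (hℓ t ht).ne').const_mul _
  have key := image_norm_le_of_norm_deriv_right_le_deriv_boundary'
    (f := fun t => g t - g 0) (a := 0) (b := 1)
    (fun t ht => ((hg t ht).sub_const _).continuousAt.continuousWithinAt)
    (fun t ht => ((hg t (Set.Ico_subset_Icc_self ht)).sub_const _).hasDerivWithinAt)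
    (by simp)
    (fun t ht => (hβ t ht).continuousAt.continuousWithinAt)
    (fun t ht => (hβ t (Set.Ico_subset_Icc_self ht)).hasDerivWithinAt)
    (fun t ht => (hg' t (Set.Ico_subset_Icc_self ht)).trans_eq (div_eq_mul_inv _ _))
    (Set.right_mem_Icc.2 zero_le_one)
  simpa [ℓ, div_eq_mul_inv] using key

theorem norm_sub_le_of_norm_deriv_le {f : ℂ → ℂ} {C : ℝ}
    (hf : DifferentiableOn ℂ f (ball 0 1))
    (hbound : ∀ ζ ∈ ball (0 : ℂ) 1, ‖deriv f ζ‖ ≤ C / (1 - ‖ζ‖) ^ 2) {z w : ℂ}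
    (hz : z ∈ ball (0 : ℂ) 1) (hw : w ∈ ball (0 : ℂ) 1) :
    ‖f w - f z‖ ≤ C * ‖w - z‖ / ((1 - ‖z‖) * (1 - ‖w‖)) := by
  have hA : 0 < 1 - ‖z‖ := sub_pos.2 (mem_ball_zero_iff.1 hz)
  have hB : 0 < 1 - ‖w‖ := sub_pos.2 (mem_ball_zero_iff.1 hw)
  have hC : 0 ≤ C := by
    have := mul_nonneg ((norm_nonneg _).trans (hbound z hz)) (sq_nonneg (1 - ‖z‖))
    rwa [div_mul_cancel₀ _ (by positivity)] at this
  set γ : ℝ → ℂ := fun t => z + t • (w - z)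
  have hℓγ : ∀ t ∈ Set.Icc (0 : ℝ) 1,
      0 < (1 - t) * (1 - ‖z‖) + t * (1 - ‖w‖) ∧
        (1 - t) * (1 - ‖z‖) + t * (1 - ‖w‖) ≤ 1 - ‖γ t‖ := fun t ht =>
    ⟨convex_Ioi (0 : ℝ) hA hB (sub_nonneg.2 ht.2) ht.1 (sub_add_cancel 1 t),
      by linarith [norm_add_smul_sub_le z w ht]⟩
  have hγmem : ∀ t ∈ Set.Icc (0 : ℝ) 1, γ t ∈ ball (0 : ℂ) 1 := fun t ht =>
    mem_ball_zero_iff.2 (by linarith [hℓγ t ht])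
  have hfγ : ∀ t ∈ Set.Icc (0 : ℝ) 1, HasDerivAt (f ∘ γ) ((w - z) • deriv f (γ t)) t :=
    fun t ht => ((hf.differentiableAt (isOpen_ball.mem_nhds (hγmem t ht))).hasDerivAt).scomp t
      (by simpa [γ] using ((hasDerivAt_id t).smul_const (w - z)).const_add z)
  have hbound' : ∀ t ∈ Set.Icc (0 : ℝ) 1, ‖(w - z) • deriv f (γ t)‖ ≤
      C * ‖w - z‖ / ((1 - t) * (1 - ‖z‖) + t * (1 - ‖w‖)) ^ 2 := fun t ht => by
    obtain ⟨hℓ, hℓγ⟩ := hℓγ t ht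
    calc ‖(w - z) • deriv f (γ t)‖ = ‖w - z‖ * ‖deriv f (γ t)‖ := norm_smul _ _
      _ ≤ ‖w - z‖ * (C / (1 - ‖γ t‖) ^ 2) := by gcongr; exact hbound _ (hγmem t ht)
      _ ≤ ‖w - z‖ * (C / ((1 - t) * (1 - ‖z‖) + t * (1 - ‖w‖)) ^ 2) := by gcongr
      _ = _ := by ring
  simpa [γ] using norm_sub_le_of_norm_deriv_le_div_affine_sq hA hB hfγ hbound'

/-- additive Harnack inequality for positive harmonic functions on the
unit disk: `|h(z) − h(w)| ≤ 2|z − w| h(0) / ((1 − |z|)(1 − |w|))`. -/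
theorem additive_harnack
    (h : ℂ → ℝ)
    (hsmooth : ContDiffOn ℝ 2 h (Metric.ball (0 : ℂ) 1))
    (hharm : ∀ z ∈ Metric.ball (0 : ℂ) 1, lapWithin h (Metric.ball (0 : ℂ) 1) z = 0)
    (hpos : ∀ z ∈ Metric.ball (0 : ℂ) 1, 0 < h z)
    (z w : ℂ) (hz : z ∈ Metric.ball (0 : ℂ) 1) (hw : w ∈ Metric.ball (0 : ℂ) 1) :
    |h z - h w| ≤ 2 * ‖z - w‖ / ((1 - ‖z‖) * (1 - ‖w‖)) * h 0 := by
  obtain ⟨F, hF, hFre⟩ :=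
    (harmonicOnNhd_of_lapWithin_eq_zero isOpen_ball hsmooth hharm).exists_analyticOnNhd_ball_re_eq
  replace hFre : ∀ ζ ∈ ball (0 : ℂ) 1, (F ζ).re = h ζ := fun ζ hζ => hFre hζ
  have hFpos : ∀ ζ ∈ ball (0 : ℂ) 1, 0 < (F ζ).re := fun ζ hζ =>
    hFre ζ hζ ▸ hpos ζ hζ
  have hbound := norm_sub_le_of_norm_deriv_le hF.differentiableOn
    (fun ζ hζ => norm_deriv_le_of_re_pos hF.differentiableOn hFpos hζ) hw hz
  calc |h z - h w| = |(F z - F w).re| := by rw [sub_re, hFre z hz, hFre w hw]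
    _ ≤ ‖F z - F w‖ := abs_re_le_norm _
    _ ≤ 2 * (F 0).re * ‖z - w‖ / ((1 - ‖w‖) * (1 - ‖z‖)) := hbound
    _ = 2 * ‖z - w‖ / ((1 - ‖z‖) * (1 - ‖w‖)) * h 0 := by
      rw [hFre 0 (mem_ball_self one_pos)]; ring
end

section
/- Let h : 𝕋 → ℝ be continuous with ∫₀^{2π} h(e^{iθ}) dθ = 0. Then for every ε > 0 there exist n ∈ ℕ and points z₁,…,z_n, w₁,…,w_n ∈ 𝔻 such that |h(ζ) − ∑_{k=1}^{n} P(z_k, ζ) + ∑_{k=1}^{n} P(w_k, ζ)| < ε for all ζ ∈ 𝕋. -/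
/-!
On the circle, with `u = z ζ̄`, the Poisson kernel is `P(z, ζ) = 1 + 2 Re (u / (1 - u))`. Summing
over the `k` rotations `z ωʲ` by the `k`-th roots of unity keeps only the powers of `u` divisible by
`k`: `∑ⱼ (P(z ωʲ, ζ) - 1) = 2k Re (v / (1 - v))` with `v = uᵏ`, which is `2k Re v + O(k ‖v‖²)`.
So `m` copies of this cluster, with `zᵏ = c̄ / (2mk)`, approximate `Re (c ζᵏ)` within `‖c‖² / (mk)`,
and every uniform limit of real trigonometric polynomials without constant term is approximated by
sums `∑ᵢ (P(zᵢ, ·) - P(0, ·))`. By density of trigonometric polynomials, a continuous `h` is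
uniformly close to one of them, and when `h` has mean zero the constant term of that polynomial is
at most the approximation error.
-/

open Complex MeasureTheory intervalIntegral

/-- The Poisson kernel of the unit disk. -/
noncomputable def poissonK (z ζ : ℂ) : ℝ := (1 - ‖z‖ ^ 2) / ‖ζ - z‖ ^ 2

open ComplexConjugate Finset Metric

lemma div_one_sub_eq_sum_range_pow_div {K : Type*} [Field K] {x : K} (k : ℕ) (hx : x ^ k ≠ 1) :
    x / (1 - x) = (∑ t ∈ range k, x ^ (t + 1)) / (1 - x ^ k) := by
  have hx1 : x ≠ 1 := by rintro rfl; simp at hx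
  rw [div_eq_div_iff (sub_ne_zero.mpr hx1.symm) (sub_ne_zero.mpr (Ne.symm hx))]
  simp only [pow_succ, ← sum_mul]
  linear_combination x * mul_geom_sum x k

theorem IsPrimitiveRoot.sum_mul_pow_div_one_sub {K : Type*} [Field K] {ω : K} {k : ℕ}
    (hω : IsPrimitiveRoot ω k) {u : K} (hu : u ^ k ≠ 1) :
    ∑ j ∈ range k, u * ω ^ j / (1 - u * ω ^ j) = k * u ^ k / (1 - u ^ k) := by
  obtain _ | k := k
  · simp at hu
  have hxk : ∀ j, (u * ω ^ j) ^ (k + 1) = u ^ (k + 1) := fun j => by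
    rw [mul_pow, ← pow_mul, mul_comm j, pow_mul, hω.pow_eq_one, one_pow, mul_one]
  have hchar : ∀ t ∈ range k, ∑ j ∈ range (k + 1), (ω ^ (t + 1)) ^ j = 0 := fun t ht => by
    have hne := hω.pow_ne_one_of_pos_of_lt t.succ_ne_zero (by simpa using ht)
    rw [geom_sum_eq hne, ← pow_mul, mul_comm, pow_mul, hω.pow_eq_one, one_pow, sub_self,
      zero_div]
  have hswap : ∀ j t : ℕ, (u * ω ^ j) ^ (t + 1) = u ^ (t + 1) * (ω ^ (t + 1)) ^ j := fun j t => by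
    rw [mul_pow, ← pow_mul, ← pow_mul, mul_comm j]
  calc ∑ j ∈ range (k + 1), u * ω ^ j / (1 - u * ω ^ j)
      = ∑ j ∈ range (k + 1), (∑ t ∈ range (k + 1), (u * ω ^ j) ^ (t + 1)) / (1 - u ^ (k + 1)) :=
        sum_congr rfl fun j _ => by
          rw [div_one_sub_eq_sum_range_pow_div (k + 1) ((hxk j).symm ▸ hu), hxk]
    _ = (∑ t ∈ range (k + 1), u ^ (t + 1) * ∑ j ∈ range (k + 1), (ω ^ (t + 1)) ^ j)
          / (1 - u ^ (k + 1)) := by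
        simp only [← sum_div, hswap, mul_sum]
        rw [sum_comm]
    _ = (k + 1 : ℕ) * u ^ (k + 1) / (1 - u ^ (k + 1)) := by
        rw [sum_range_succ, sum_eq_zero fun t ht => by rw [hchar t ht, mul_zero], hω.pow_eq_one]
        simp [mul_comm]

lemma norm_div_one_sub_sub_self_le {𝕜 : Type*} [NormedField 𝕜] {v : 𝕜} (hv : ‖v‖ ≤ 1 / 2) :
    ‖v / (1 - v) - v‖ ≤ 2 * ‖v‖ ^ 2 := by
  have h1v : 1 / 2 ≤ ‖1 - v‖ := by
    linarith [norm_sub_norm_le (1 : 𝕜) v, norm_one (α := 𝕜)]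
  have hne : 1 - v ≠ 0 := norm_pos_iff.mp (by linarith)
  rw [show v / (1 - v) - v = v ^ 2 / (1 - v) by field_simp; ring, norm_div, norm_pow,
    div_le_iff₀ (by linarith)]
  nlinarith [sq_nonneg ‖v‖]

lemma one_add_two_mul_re_div_one_sub {u : ℂ} (hu : u ≠ 1) :
    1 + 2 * (u / (1 - u)).re = (1 - ‖u‖ ^ 2) / ‖1 - u‖ ^ 2 := by
  have hN : normSq (1 - u) ≠ 0 := normSq_eq_zero.not.mpr (sub_ne_zero.mpr hu.symm)
  rw [Complex.sq_norm, Complex.sq_norm, div_re]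
  field_simp
  simp only [normSq_apply, sub_re, sub_im, one_re, one_im]
  ring

lemma poissonK_eq_one_add_re {z ζ : ℂ} (hζ : ‖ζ‖ = 1) (hz : z ≠ ζ) :
    poissonK z ζ = 1 + 2 * (z * conj ζ / (1 - z * conj ζ)).re := by
  have hζζ : ζ * conj ζ = 1 := by rw [mul_conj, normSq_eq_norm_sq, hζ]; simp
  have hu : z * conj ζ ≠ 1 := fun h => hz (by linear_combination ζ * h - z * hζζ)
  rw [one_add_two_mul_re_div_one_sub hu, poissonK,
    show ζ - z = ζ * (1 - z * conj ζ) by linear_combination z * hζζ]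
  simp [hζ]

/-- On the circle the `- 1` is `poissonK 0 ζ`, so this is a difference of two sums of Poisson
kernels. -/
noncomputable def poissonSum (s : Multiset ℂ) (ζ : ℂ) : ℝ :=
  (s.map fun z => poissonK z ζ - 1).sum

lemma poissonSum_add (s t : Multiset ℂ) (ζ : ℂ) :
    poissonSum (s + t) ζ = poissonSum s ζ + poissonSum t ζ := by
  simp [poissonSum]

lemma poissonSum_nsmul (m : ℕ) (s : Multiset ℂ) (ζ : ℂ) :
    poissonSum (m • s) ζ = m * poissonSum s ζ := by
  simp [poissonSum, Multiset.map_nsmul, Multiset.sum_nsmul]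

lemma poissonSum_map_range_mul_pow {ω : ℂ} {k : ℕ} (hω : IsPrimitiveRoot ω k) {z ζ : ℂ}
    (hz : ‖z‖ < 1) (hζ : ‖ζ‖ = 1) :
    poissonSum ((Multiset.range k).map fun j => z * ω ^ j) ζ =
      2 * k * ((z * conj ζ) ^ k / (1 - (z * conj ζ) ^ k)).re := by
  rw [poissonSum, Multiset.map_map]
  change ∑ j ∈ range k, (poissonK (z * ω ^ j) ζ - 1) = _
  rcases eq_or_ne k 0 with rfl | hk
  · simp
  have hu : ‖z * conj ζ‖ < 1 := by simpa [hζ] using hz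
  have huk : (z * conj ζ) ^ k ≠ 1 := fun h =>
    (pow_lt_one₀ (norm_nonneg _) hu hk).ne (by rw [← norm_pow, h, norm_one])
  have hterm : ∀ j, poissonK (z * ω ^ j) ζ - 1 =
      2 * (z * conj ζ * ω ^ j / (1 - z * conj ζ * ω ^ j)).re := fun j => by
    have hzj : z * ω ^ j ≠ ζ := fun h => by
      simp [← h, hω.norm'_eq_one hk] at hζ; linarith
    rw [poissonK_eq_one_add_re hζ hzj, mul_right_comm]
    ring
  simp_rw [hterm, ← mul_sum, ← re_sum, hω.sum_mul_pow_div_one_sub huk, mul_div_assoc,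
    ← ofReal_natCast, re_ofReal_mul]
  ring

lemma exists_poissonSum_near_re_mul_pow (c : ℂ) {k m : ℕ} (hk : k ≠ 0) (hm : m ≠ 0)
    (hc : ‖c‖ ≤ m * k) :
    ∃ s : Multiset ℂ, (∀ z ∈ s, ‖z‖ < 1) ∧
      ∀ ζ, ‖ζ‖ = 1 → |(c * ζ ^ k).re - poissonSum s ζ| ≤ ‖c‖ ^ 2 / (m * k) := by
  set M : ℝ := 2 * m * k
  have hM : 0 < M := by positivity
  have hcM : ‖c‖ / M ≤ 1 / 2 := by
    rw [div_le_iff₀ hM]; linarith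
  obtain ⟨z, hz⟩ := IsAlgClosed.exists_pow_nat_eq (conj c / M) (Nat.pos_of_ne_zero hk)
  have hzk : ‖z‖ ^ k = ‖c‖ / M := by
    rw [← norm_pow, hz, norm_div, RCLike.norm_conj, norm_real, Real.norm_of_nonneg hM.le]
  have hz1 : ‖z‖ < 1 := (pow_lt_one_iff_of_nonneg (norm_nonneg z) hk).mp (by linarith)
  obtain ⟨ω, hω⟩ : ∃ ω : ℂ, IsPrimitiveRoot ω k := ⟨_, isPrimitiveRoot_exp k hk⟩
  refine ⟨m • (Multiset.range k).map fun j => z * ω ^ j, ?_, ?_⟩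
  · intro w hw
    obtain ⟨j, -, rfl⟩ := Multiset.mem_map.mp (Multiset.mem_of_mem_nsmul hw)
    simpa [hω.norm'_eq_one hk] using hz1
  intro ζ hζ
  set v := (z * conj ζ) ^ k
  have hv : ‖v‖ = ‖c‖ / M := by simp [v, mul_pow, hζ, ← hzk]
  have hMv : (c * ζ ^ k).re = M * v.re := by
    have hMv' : (M : ℂ) * v = conj (c * ζ ^ k) := by
      have hM' : (M : ℂ) ≠ 0 := ofReal_ne_zero.mpr hM.ne'
      simp only [v, mul_pow, hz, map_mul, map_pow]
      field_simp
    rw [← re_ofReal_mul, hMv', conj_re]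
  rw [poissonSum_nsmul, poissonSum_map_range_mul_pow hω hz1 hζ, hMv]
  calc |M * v.re - m * (2 * k * (v / (1 - v)).re)| = M * |(v / (1 - v) - v).re| := by
        rw [← abs_of_pos hM, ← abs_mul, abs_of_pos hM, ← abs_neg, sub_re]
        congr 1; ring
    _ ≤ M * (2 * ‖v‖ ^ 2) :=
        mul_le_mul_of_nonneg_left ((abs_re_le_norm _).trans
          (norm_div_one_sub_sub_self_le (hv ▸ hcM))) hM.le
    _ = ‖c‖ ^ 2 / (m * k) := by
        rw [hv]; field_simp; ring

def PoissonApproximable (g : ℂ → ℝ) : Prop :=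
  ∀ ε > 0, ∃ s : Multiset ℂ, (∀ z ∈ s, ‖z‖ < 1) ∧ ∀ ζ, ‖ζ‖ = 1 → |g ζ - poissonSum s ζ| < ε

namespace PoissonApproximable

lemma zero : PoissonApproximable 0 :=
  fun ε hε => ⟨0, by simp, fun ζ _ => by simpa [poissonSum] using hε⟩

lemma congr {f g : ℂ → ℝ} (hg : PoissonApproximable g) (hfg : ∀ ζ, ‖ζ‖ = 1 → f ζ = g ζ) :
    PoissonApproximable f := fun ε hε => by
  obtain ⟨s, hs, hsg⟩ := hg ε hε
  exact ⟨s, hs, fun ζ hζ => hfg ζ hζ ▸ hsg ζ hζ⟩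

lemma add {f g : ℂ → ℝ} (hf : PoissonApproximable f) (hg : PoissonApproximable g) :
    PoissonApproximable (f + g) := fun ε hε => by
  obtain ⟨s, hs, hsf⟩ := hf (ε / 2) (half_pos hε)
  obtain ⟨t, ht, htg⟩ := hg (ε / 2) (half_pos hε)
  refine ⟨s + t, fun z hz => (Multiset.mem_add.mp hz).elim (hs z) (ht z), fun ζ hζ => ?_⟩
  rw [Pi.add_apply, poissonSum_add]
  calc |f ζ + g ζ - (poissonSum s ζ + poissonSum t ζ)|
      = |(f ζ - poissonSum s ζ) + (g ζ - poissonSum t ζ)| := by ring_nf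
    _ ≤ |f ζ - poissonSum s ζ| + |g ζ - poissonSum t ζ| := abs_add_le _ _
    _ < ε := by linarith [hsf ζ hζ, htg ζ hζ]

lemma sum {ι : Type*} (s : Finset ι) {g : ι → ℂ → ℝ} (hg : ∀ i ∈ s, PoissonApproximable (g i)) :
    PoissonApproximable (∑ i ∈ s, g i) := by
  induction s using Finset.cons_induction with
  | empty => simpa using zero
  | cons a s ha ih =>
    rw [sum_cons]
    exact (hg a (mem_cons_self a s)).add (ih fun i hi => hg i (mem_cons_of_mem hi))

lemma of_forall_near {g : ℂ → ℝ}
    (h : ∀ δ > 0, ∃ f, PoissonApproximable f ∧ ∀ ζ, ‖ζ‖ = 1 → |g ζ - f ζ| ≤ δ) :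
    PoissonApproximable g := fun ε hε => by
  obtain ⟨f, hf, hgf⟩ := h (ε / 2) (half_pos hε)
  obtain ⟨s, hs, hfs⟩ := hf (ε / 2) (half_pos hε)
  refine ⟨s, hs, fun ζ hζ => ?_⟩
  calc |g ζ - poissonSum s ζ| ≤ |g ζ - f ζ| + |f ζ - poissonSum s ζ| := abs_sub_le _ _ _
    _ < ε := by linarith [hgf ζ hζ, hfs ζ hζ]

end PoissonApproximable

lemma poissonApproximable_re_mul_pow (c : ℂ) {k : ℕ} (hk : k ≠ 0) :
    PoissonApproximable fun ζ => (c * ζ ^ k).re := fun ε hε => by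
  obtain ⟨m, hm⟩ := exists_nat_gt (‖c‖ + ‖c‖ ^ 2 / ε)
  have hm0 : (0 : ℝ) < m := by
    linarith [show 0 ≤ ‖c‖ ^ 2 / ε by positivity, norm_nonneg c]
  have hk1 : (1 : ℝ) ≤ k := Nat.one_le_cast.mpr (Nat.pos_of_ne_zero hk)
  obtain ⟨s, hs, hcs⟩ := exists_poissonSum_near_re_mul_pow c hk (by exact_mod_cast hm0.ne')
    (show ‖c‖ ≤ m * k by nlinarith [show 0 ≤ ‖c‖ ^ 2 / ε by positivity])
  refine ⟨s, hs, fun ζ hζ => (hcs ζ hζ).trans_lt ?_⟩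
  calc ‖c‖ ^ 2 / (m * k) ≤ ‖c‖ ^ 2 / m :=
        div_le_div_of_nonneg_left (sq_nonneg _) hm0 (le_mul_of_one_le_right hm0.le hk1)
    _ < ε := by
        have hcm := (div_lt_iff₀ hε).mp (show ‖c‖ ^ 2 / ε < m by linarith [norm_nonneg c])
        rw [div_lt_iff₀ hm0]
        linarith

lemma exists_re_mul_zpow_eq_re_mul_pow_natAbs (c : ℂ) (n : ℤ) :
    ∃ c' : ℂ, ∀ ζ : ℂ, ‖ζ‖ = 1 → (c * ζ ^ n).re = (c' * ζ ^ n.natAbs).re := by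
  obtain ⟨k, rfl | rfl⟩ := Int.eq_nat_or_neg n
  · exact ⟨c, fun ζ _ => by simp⟩
  · refine ⟨conj c, fun ζ hζ => ?_⟩
    have hζk : ‖ζ ^ k‖ = 1 := by simp [hζ]
    rw [← conj_re, map_mul, zpow_neg, zpow_natCast, inv_eq_conj hζk, conj_conj,
      Int.natAbs_neg, Int.natAbs_natCast]

lemma poissonApproximable_re_mul_zpow (c : ℂ) {n : ℤ} (hn : n ≠ 0) :
    PoissonApproximable fun ζ => (c * ζ ^ n).re := by
  obtain ⟨c', hc'⟩ := exists_re_mul_zpow_eq_re_mul_pow_natAbs c n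
  exact (poissonApproximable_re_mul_pow c' (Int.natAbs_ne_zero.mpr hn)).congr hc'

noncomputable def laurentSum (c : ℤ →₀ ℂ) (ζ : ℂ) : ℂ := c.sum fun n a => a * ζ ^ n

lemma exists_toCircle_eq {ζ : ℂ} (hζ : ‖ζ‖ = 1) :
    ∃ x : AddCircle (2 * Real.pi), (AddCircle.toCircle x : ℂ) = ζ := by
  obtain ⟨x, hx⟩ := (AddCircle.homeomorphCircle Real.two_pi_pos.ne').surjective
    ⟨ζ, mem_sphere_zero_iff_norm.mpr hζ⟩
  exact ⟨x, by rw [← AddCircle.homeomorphCircle_apply Real.two_pi_pos.ne', hx]⟩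

lemma exists_laurentSum_near {h : ℂ → ℂ} (hh : ContinuousOn h (sphere 0 1)) {δ : ℝ}
    (hδ : 0 < δ) : ∃ c : ℤ →₀ ℂ, ∀ ζ, ‖ζ‖ = 1 → ‖h ζ - laurentSum c ζ‖ < δ := by
  have : Fact (0 < 2 * Real.pi) := ⟨Real.two_pi_pos⟩
  let g : C(AddCircle (2 * Real.pi), ℂ) :=
    ⟨fun x => h (AddCircle.toCircle x), hh.comp_continuous
      (continuous_subtype_val.comp AddCircle.continuous_toCircle)
      fun x => by simp [Circle.norm_coe]⟩
  have hdense := Submodule.dense_iff_topologicalClosure_eq_top.mpr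
    (span_fourier_closure_eq_top (T := 2 * Real.pi))
  obtain ⟨f, hf, hgf⟩ := hdense.exists_dist_lt g hδ
  obtain ⟨c, rfl⟩ := Finsupp.mem_span_range_iff_exists_finsupp.mp hf
  refine ⟨c, fun ζ hζ => ?_⟩
  obtain ⟨x, rfl⟩ := exists_toCircle_eq hζ
  have hfx : (c.sum fun n a => a • fourier n) x = laurentSum c (AddCircle.toCircle x) := by
    simp [laurentSum, Finsupp.sum, AddCircle.toCircle_zsmul]
  rw [← hfx, ← dist_eq_norm]
  exact (ContinuousMap.dist_apply_le_dist x).trans_lt hgf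

lemma integral_exp_mul_I_zpow (n : ℤ) :
    ∫ θ in (0 : ℝ)..2 * Real.pi, exp (θ * I) ^ n = if n = 0 then (2 * Real.pi : ℂ) else 0 := by
  split_ifs with hn
  · simp [hn]
  have hnI : (n : ℂ) * I ≠ 0 := mul_ne_zero (Int.cast_ne_zero.mpr hn) I_ne_zero
  have hexp : ∀ θ : ℝ, exp (θ * I) ^ n = exp (n * I * θ) := fun θ => by
    rw [← exp_int_mul]; ring_nf
  simp_rw [hexp]
  rw [integral_exp_mul_complex hnI, ofReal_zero, mul_zero, exp_zero,
    show (n : ℂ) * I * (2 * Real.pi : ℝ) = n * (2 * Real.pi * I) by push_cast; ring,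
    exp_int_mul_two_pi_mul_I, sub_self, zero_div]

lemma integral_laurentSum_exp_mul_I (c : ℤ →₀ ℂ) :
    ∫ θ in (0 : ℝ)..2 * Real.pi, laurentSum c (exp (θ * I)) = 2 * Real.pi * c 0 := by
  simp only [laurentSum, Finsupp.sum]
  rw [intervalIntegral.integral_finsetSum fun n _ => Continuous.intervalIntegrable
    (by fun_prop (disch := simp)) _ _]
  simp only [intervalIntegral.integral_const_mul, integral_exp_mul_I_zpow, mul_ite, mul_zero]
  rw [sum_ite_eq']
  split_ifs with h0
  · ring
  · simp [Finsupp.notMem_support_iff.mp h0]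

lemma laurentSum_eq_add_erase (c : ℤ →₀ ℂ) (ζ : ℂ) :
    laurentSum c ζ = c 0 + laurentSum (c.erase 0) ζ := by
  conv_lhs => rw [← Finsupp.single_add_erase 0 c]
  rw [laurentSum, Finsupp.sum_add_index' (by simp) (by intros; ring),
    Finsupp.sum_single_index (by simp)]
  simp [laurentSum]

lemma norm_apply_zero_le_of_integral_eq_zero {h : ℂ → ℂ} (hcont : ContinuousOn h (sphere 0 1))
    (hmean : ∫ θ in (0 : ℝ)..2 * Real.pi, h (exp (θ * I)) = 0) {c : ℤ →₀ ℂ} {δ : ℝ}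
    (hc : ∀ ζ, ‖ζ‖ = 1 → ‖h ζ - laurentSum c ζ‖ ≤ δ) : ‖c 0‖ ≤ δ := by
  have hexp : Continuous fun θ : ℝ => exp (θ * I) := by fun_prop
  have hh : IntervalIntegrable (fun θ : ℝ => h (exp (θ * I))) volume 0 (2 * Real.pi) :=
    (hcont.comp_continuous hexp fun θ => by simp [norm_exp_ofReal_mul_I]).intervalIntegrable _ _
  have hL : IntervalIntegrable (fun θ : ℝ => laurentSum c (exp (θ * I))) volume 0
      (2 * Real.pi) := by
    refine Continuous.intervalIntegrable ?_ _ _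
    simp only [laurentSum, Finsupp.sum]
    fun_prop (disch := simp)
  have hint : ‖∫ θ in (0 : ℝ)..2 * Real.pi, (h (exp (θ * I)) - laurentSum c (exp (θ * I)))‖
      ≤ δ * |2 * Real.pi - 0| :=
    norm_integral_le_of_norm_le_const fun θ _ => hc _ (norm_exp_ofReal_mul_I θ)
  rw [integral_sub hh hL, hmean, integral_laurentSum_exp_mul_I, zero_sub, norm_neg, norm_mul,
    sub_zero, abs_of_pos Real.two_pi_pos] at hint
  have h2π : 2 * Real.pi * ‖c 0‖ ≤ 2 * Real.pi * δ := by
    simpa [abs_of_pos Real.pi_pos, mul_comm δ] using hint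
  exact le_of_mul_le_mul_left h2π Real.two_pi_pos

lemma poissonApproximable_re_laurentSum {c : ℤ →₀ ℂ} (hc : c 0 = 0) :
    PoissonApproximable fun ζ => (laurentSum c ζ).re := by
  refine (PoissonApproximable.sum c.support fun n hn =>
    poissonApproximable_re_mul_zpow (n := n) (c n)
      (by rintro rfl; exact Finsupp.mem_support_iff.mp hn hc)).congr fun ζ _ => ?_
  simp [laurentSum, Finsupp.sum, re_sum]

theorem poissonApproximable_of_integral_eq_zero {h : ℂ → ℝ}
    (hcont : ContinuousOn h (sphere 0 1))
    (hmean : ∫ θ in (0 : ℝ)..2 * Real.pi, h (exp (θ * I)) = 0) : PoissonApproximable h := by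
  refine .of_forall_near fun δ hδ => ?_
  have hcont' : ContinuousOn (fun ζ => (h ζ : ℂ)) (sphere 0 1) :=
    continuous_ofReal.comp_continuousOn hcont
  obtain ⟨c, hc⟩ := exists_laurentSum_near hcont' (half_pos hδ)
  have hc0 : ‖c 0‖ ≤ δ / 2 := norm_apply_zero_le_of_integral_eq_zero hcont'
    (by rw [integral_ofReal, hmean, ofReal_zero]) fun ζ hζ => (hc ζ hζ).le
  refine ⟨_, poissonApproximable_re_laurentSum (Finsupp.erase_same (a := (0 : ℤ)) (f := c)),
    fun ζ hζ => ?_⟩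
  calc |h ζ - (laurentSum (c.erase 0) ζ).re| = |((h ζ : ℂ) - laurentSum c ζ).re + (c 0).re| := by
        rw [laurentSum_eq_add_erase c]; simp only [sub_re, add_re, ofReal_re]; ring_nf
    _ ≤ ‖(h ζ : ℂ) - laurentSum c ζ‖ + ‖c 0‖ :=
        (abs_add_le _ _).trans (add_le_add (abs_re_le_norm _) (abs_re_le_norm _))
    _ ≤ δ := by linarith [hc ζ hζ]

/-- a continuous function on the circle with zero mean can be uniformly
approximated by differences of sums of Poisson kernels with poles in the disk. -/
theorem approx_by_poisson_differences
    (h : ℂ → ℝ) (hcont : ContinuousOn h (Metric.sphere (0 : ℂ) 1))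
    (hmean : ∫ θ in (0:ℝ)..(2 * Real.pi), h (Complex.exp (θ * Complex.I)) = 0)
    (ε : ℝ) (hε : 0 < ε) :
    ∃ (n : ℕ) (z w : Fin n → ℂ), (∀ k, ‖z k‖ < 1) ∧ (∀ k, ‖w k‖ < 1) ∧
      ∀ ζ : ℂ, ‖ζ‖ = 1 →
        |h ζ - ∑ k, poissonK (z k) ζ + ∑ k, poissonK (w k) ζ| < ε := by
  obtain ⟨s, hs, hsh⟩ := poissonApproximable_of_integral_eq_zero hcont hmean ε hε
  refine ⟨s.toList.length, fun k => s.toList[(k : ℕ)], fun _ => 0,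
    fun k => hs _ (Multiset.mem_toList.mp (List.getElem_mem _)), fun _ => by simp,
    fun ζ hζ => ?_⟩
  have hsum : poissonSum s ζ =
      ∑ k : Fin s.toList.length, poissonK s.toList[(k : ℕ)] ζ - s.toList.length := by
    rw [Fin.sum_univ_fun_getElem s.toList (poissonK · ζ), ← Multiset.sum_coe, ← Multiset.map_coe,
      Multiset.coe_toList, Multiset.length_toList, poissonSum]
    simp [Multiset.sum_map_sub]
  simpa [poissonK, hζ, hsum, sub_add] using hsh ζ hζ
end

section
/- Let u : ℝ → ℝ be a 2π-periodic continuously differentiable function, let ε > 0, and suppose z₁,…,z_n, w₁,…,w_n ∈ 𝔻 are such that |u′(θ) − ∑_{k=1}^{n} P(z_k, e^{iθ}) + ∑_{k=1}^{n} P(w_k, e^{iθ})| < ε for all θ ∈ ℝ. Then there exists σ ∈ 𝕋 such that, setting B(ζ) = σ ∏_{k=1}^{n} ((ζ − z_k)/(1 − conj(z_k) ζ)) · ((1 − conj(w_k) ζ)/(ζ − w_k)), there is a 2π-periodic continuously differentiable function v : ℝ → ℝ with e^{iv(θ)} = B(e^{iθ}) for all θ (a continuous branch of arg B) satisfying sup|u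 − v| + sup|u′ − v′| < (π + 1)ε. -/
/-!
Along the unit circle the Möbius factor `m_z(ζ) = (ζ - z) / (1 - z̄ ζ)` satisfies
`d/dθ m_z(e^{iθ}) = i P(z, e^{iθ}) m_z(e^{iθ})`, so `θ ↦ ∫₀^θ P(z, e^{is}) ds` is a continuous
argument of `m_z(e^{iθ})` up to the unimodular constant `m_z(1)`; it gains `2π` over a period
since `P(z, ·)` has mean one. Hence `v = u(0) + ∑ ∫₀^θ P(z_k, ·) - ∑ ∫₀^θ P(w_k, ·)` is a
`2π`-periodic `C¹` argument of `σ B` with `v' = ∑ P(z_k, ·) - ∑ P(w_k, ·)`. The periodic function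
`u - v` vanishes at `0` and its derivative stays below some `b < ε`; every point lies within `π`
of a zero of `u - v`, so `|u - v| ≤ π b`.
-/

open Complex MeasureTheory ComplexConjugate

theorem eq_mul_exp_integral_of_hasDerivAt {f a : ℝ → ℂ} (ha : Continuous a)
    (hf : ∀ t, HasDerivAt f (a t * f t) t) (θ : ℝ) :
    f θ = f 0 * exp (∫ s in (0 : ℝ)..θ, a s) := by
  set A := fun t : ℝ => ∫ s in (0 : ℝ)..t, a s
  have hA : ∀ t, HasDerivAt A (a t) t := fun t => (ha.integral_hasStrictDerivAt 0 t).hasDerivAt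
  have hg : ∀ t, HasDerivAt (fun t => f t * exp (-A t)) 0 t := fun t =>
    ((hf t).fun_mul (hA t).neg.cexp).congr_deriv (by ring)
  have hconst := is_const_of_deriv_eq_zero (fun t => (hg t).differentiableAt)
    (fun t => (hg t).deriv) θ 0
  simp only [A, intervalIntegral.integral_same, neg_zero, exp_zero, mul_one] at hconst
  rw [← hconst, mul_assoc, ← exp_add, neg_add_cancel, exp_zero, mul_one]

theorem Function.Periodic.deriv {𝕜 F : Type*} [NontriviallyNormedField 𝕜] [NormedAddCommGroup F]
    [NormedSpace 𝕜 F] {f : 𝕜 → F} {c : 𝕜} (h : Function.Periodic f c) :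
    Function.Periodic (deriv f) c := fun x => by
  rw [← deriv_comp_add_const, h.funext]

theorem Function.Periodic.exists_lt_forall_le_of_forall_lt {α : Type*} [TopologicalSpace α]
    [LinearOrder α] [ClosedIciTopology α] {f : ℝ → α} {c : ℝ} {a : α} (hf : Function.Periodic f c)
    (hc : c ≠ 0) (hcont : Continuous f) (h : ∀ t, f t < a) : ∃ b < a, ∀ t, f t ≤ b := by
  obtain ⟨_, ⟨t, rfl⟩, hmax⟩ :=
    (hf.compact_of_continuous hc hcont).exists_isGreatest (Set.range_nonempty f)
  exact ⟨f t, h t, fun s => hmax ⟨s, rfl⟩⟩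

theorem Function.Periodic.abs_le_of_abs_deriv_le {g g' : ℝ → ℝ} {T b : ℝ}
    (hg : Function.Periodic g T) (hT : 0 < T) (h0 : g 0 = 0)
    (hderiv : ∀ t, HasDerivAt g (g' t) t) (hb : ∀ t, |g' t| ≤ b) (t : ℝ) : |g t| ≤ T / 2 * b := by
  have lip : ∀ x y, |g y - g x| ≤ b * |y - x| := fun x y => by
    simpa [Real.norm_eq_abs] using Convex.norm_image_sub_le_of_norm_hasDerivWithin_le
      (fun t _ => (hderiv t).hasDerivWithinAt) (fun t _ => hb t) convex_univ
      (Set.mem_univ x) (Set.mem_univ y)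
  obtain ⟨y, ⟨hy0, hyT⟩, hgy⟩ := hg.exists_mem_Ico₀ hT t
  have hb0 : 0 ≤ b := (abs_nonneg _).trans (hb 0)
  rw [hgy]
  rcases le_total y (T / 2) with h | h
  · calc |g y| = |g y - g 0| := by rw [h0, sub_zero]
      _ ≤ b * |y - 0| := lip 0 y
      _ ≤ T / 2 * b := by rw [sub_zero, abs_of_nonneg hy0]; nlinarith
  · calc |g y| = |g y - g T| := by rw [← zero_add T, hg, h0, sub_zero]
      _ ≤ b * |y - T| := lip T y
      _ ≤ T / 2 * b := by rw [abs_of_neg (by linarith)]; nlinarith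

noncomputable def mobiusFactor (z ζ : ℂ) : ℂ := (ζ - z) / (1 - conj z * ζ)

lemma ofReal_poissonK (z ζ : ℂ) :
    (poissonK z ζ : ℂ) = (1 - z * conj z) / ((ζ - z) * conj (ζ - z)) := by
  simp only [poissonK, mul_conj, normSq_eq_norm_sq]
  push_cast; rfl

section UnitCircle

variable {z c : ℂ}

lemma sub_ne_zero_of_norm_lt_one (hz : ‖z‖ < 1) (hc : ‖c‖ = 1) : c - z ≠ 0 :=
  sub_ne_zero.mpr fun h => by simp [h] at hc; linarith

lemma conj_mul_self_of_norm_eq_one (hc : ‖c‖ = 1) : conj c * c = 1 := by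
  rw [← normSq_eq_conj_mul_self, normSq_eq_norm_sq, hc]; norm_num

lemma one_sub_conj_mul_eq (hc : ‖c‖ = 1) : 1 - conj z * c = c * conj (c - z) := by
  rw [map_sub]; linear_combination -conj_mul_self_of_norm_eq_one hc

lemma one_sub_conj_mul_ne_zero (hz : ‖z‖ < 1) (hc : ‖c‖ = 1) : 1 - conj z * c ≠ 0 := by
  rw [one_sub_conj_mul_eq hc]
  exact mul_ne_zero (norm_ne_zero_iff.mp (by simp [hc]))
    ((map_ne_zero _).mpr (sub_ne_zero_of_norm_lt_one hz hc))

lemma norm_mobiusFactor (hz : ‖z‖ < 1) (hc : ‖c‖ = 1) : ‖mobiusFactor z c‖ = 1 := by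
  rw [mobiusFactor, one_sub_conj_mul_eq hc, norm_div, norm_mul, hc, one_mul, RCLike.norm_conj,
    div_self (norm_ne_zero_iff.mpr (sub_ne_zero_of_norm_lt_one hz hc))]

end UnitCircle

lemma hasDerivAt_mobiusFactor_exp {z : ℂ} (hz : ‖z‖ < 1) (θ : ℝ) :
    HasDerivAt (fun t : ℝ => mobiusFactor z (exp (t * I)))
      (poissonK z (exp (θ * I)) * I * mobiusFactor z (exp (θ * I))) θ := by
  set c := exp (θ * I) with hcdef
  have hc : ‖c‖ = 1 := norm_exp_ofReal_mul_I θ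
  have hexp : HasDerivAt (fun t : ℝ => exp (t * I)) (c * I) θ := by
    simpa using ((hasDerivAt_id θ).ofReal_comp.mul_const I).cexp
  refine ((hexp.sub_const z).fun_div ((hexp.const_mul (conj z)).const_sub 1)
    (one_sub_conj_mul_ne_zero hz hc)).congr_deriv ?_
  have hcz := sub_ne_zero_of_norm_lt_one hz hc
  have hc0 : c ≠ 0 := exp_ne_zero _
  have hconj : conj (c - z) ≠ 0 := (map_ne_zero _).mpr hcz
  rw [← hcdef, mobiusFactor, ofReal_poissonK, one_sub_conj_mul_eq hc]
  field_simp
  rw [map_sub]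
  linear_combination conj_mul_self_of_norm_eq_one hc

section PoissonArg

variable {z : ℂ}

lemma continuous_poissonK_exp (hz : ‖z‖ < 1) :
    Continuous fun t : ℝ => poissonK z (exp (t * I)) :=
  continuous_const.div (by fun_prop) fun t => pow_ne_zero 2
    (norm_ne_zero_iff.mpr (sub_ne_zero_of_norm_lt_one hz (norm_exp_ofReal_mul_I t)))

lemma periodic_poissonK_exp (z : ℂ) :
    Function.Periodic (fun t : ℝ => poissonK z (exp (t * I))) (2 * Real.pi) := fun t => by
  simp only [ofReal_add, ofReal_mul, ofReal_ofNat, add_mul, exp_add, exp_two_pi_mul_I, mul_one]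

-- The Poisson integral formula for the constant function `1`.
lemma integral_poissonK_exp (hz : ‖z‖ < 1) :
    ∫ t in (0 : ℝ)..2 * Real.pi, poissonK z (exp (t * I)) = 2 * Real.pi := by
  have h := DiffContOnCl.circleAverage_poissonKernel_smul (w := z)
    (diffContOnCl_const (c := (1 : ℂ)) (s := Metric.ball 0 1)) (by simpa using hz)
  simp only [Real.circleAverage_def, circleMap_zero, ofReal_one, one_mul, Pi.smul_apply',
    poissonKernel, sub_zero, norm_exp_ofReal_mul_I, one_pow, real_smul, mul_one,
    intervalIntegral.integral_ofReal] at h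
  have h' : (2 * Real.pi)⁻¹ * ∫ t in (0 : ℝ)..2 * Real.pi, poissonK z (exp (t * I)) = 1 := by
    exact_mod_cast h
  field_simp at h'
  linarith

noncomputable def poissonArg (z : ℂ) (θ : ℝ) : ℝ := ∫ s in (0 : ℝ)..θ, poissonK z (exp (s * I))

lemma hasDerivAt_poissonArg (hz : ‖z‖ < 1) (θ : ℝ) :
    HasDerivAt (poissonArg z) (poissonK z (exp (θ * I))) θ :=
  ((continuous_poissonK_exp hz).integral_hasStrictDerivAt 0 θ).hasDerivAt

lemma poissonArg_add_two_pi (hz : ‖z‖ < 1) (θ : ℝ) :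
    poissonArg z (θ + 2 * Real.pi) = poissonArg z θ + 2 * Real.pi := by
  have hint := (continuous_poissonK_exp hz).intervalIntegrable (μ := volume)
  rw [poissonArg, ← intervalIntegral.integral_add_adjacent_intervals (hint 0 θ) (hint θ _),
    (periodic_poissonK_exp z).intervalIntegral_add_eq θ 0, zero_add, integral_poissonK_exp hz,
    poissonArg]

lemma mobiusFactor_exp_eq (hz : ‖z‖ < 1) (θ : ℝ) :
    mobiusFactor z (exp (θ * I)) = mobiusFactor z 1 * exp (poissonArg z θ * I) := by
  have h := eq_mul_exp_integral_of_hasDerivAt (a := fun t => (poissonK z (exp (t * I)) : ℂ) * I)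
    ((continuous_ofReal.comp (continuous_poissonK_exp hz)).mul continuous_const)
    (hasDerivAt_mobiusFactor_exp hz) θ
  rwa [intervalIntegral.integral_mul_const, intervalIntegral.integral_ofReal, ofReal_zero,
    zero_mul, exp_zero] at h

end PoissonArg

section BlaschkeQuotient

variable {ι : Type*} [Fintype ι] {z w : ι → ℂ}

noncomputable def blaschkeQuotient (z w : ι → ℂ) (ζ : ℂ) : ℂ :=
  ∏ k, mobiusFactor (z k) ζ / mobiusFactor (w k) ζ

noncomputable def blaschkeQuotientArg (z w : ι → ℂ) (θ : ℝ) : ℝ :=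
  ∑ k, poissonArg (z k) θ - ∑ k, poissonArg (w k) θ

lemma blaschkeQuotient_eq_prod (z w : ι → ℂ) (ζ : ℂ) :
    blaschkeQuotient z w ζ =
      ∏ k, (ζ - z k) / (1 - conj (z k) * ζ) * ((1 - conj (w k) * ζ) / (ζ - w k)) :=
  Finset.prod_congr rfl fun k _ => by rw [div_eq_mul_inv, mobiusFactor, mobiusFactor, inv_div]

lemma norm_blaschkeQuotient (hz : ∀ k, ‖z k‖ < 1) (hw : ∀ k, ‖w k‖ < 1) {c : ℂ} (hc : ‖c‖ = 1) :
    ‖blaschkeQuotient z w c‖ = 1 := by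
  simp [blaschkeQuotient, norm_prod, norm_mobiusFactor (hz _) hc, norm_mobiusFactor (hw _) hc]

lemma blaschkeQuotient_exp_eq (hz : ∀ k, ‖z k‖ < 1) (hw : ∀ k, ‖w k‖ < 1) (θ : ℝ) :
    blaschkeQuotient z w (exp (θ * I)) =
      blaschkeQuotient z w 1 * exp (blaschkeQuotientArg z w θ * I) := by
  simp only [blaschkeQuotient, blaschkeQuotientArg, mobiusFactor_exp_eq (hz _),
    mobiusFactor_exp_eq (hw _), ofReal_sub, ofReal_sum, sub_mul, Finset.sum_mul, exp_sub, exp_sum,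
    ← Finset.prod_div_distrib, ← Finset.prod_mul_distrib, mul_div_mul_comm]

lemma blaschkeQuotientArg_zero (z w : ι → ℂ) : blaschkeQuotientArg z w 0 = 0 := by
  simp [blaschkeQuotientArg, poissonArg]

lemma hasDerivAt_blaschkeQuotientArg (hz : ∀ k, ‖z k‖ < 1) (hw : ∀ k, ‖w k‖ < 1) (θ : ℝ) :
    HasDerivAt (blaschkeQuotientArg z w)
      (∑ k, poissonK (z k) (exp (θ * I)) - ∑ k, poissonK (w k) (exp (θ * I))) θ :=
  (HasDerivAt.fun_sum fun k _ => hasDerivAt_poissonArg (hz k) θ).sub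
    (HasDerivAt.fun_sum fun k _ => hasDerivAt_poissonArg (hw k) θ)

lemma periodic_blaschkeQuotientArg (hz : ∀ k, ‖z k‖ < 1) (hw : ∀ k, ‖w k‖ < 1) :
    Function.Periodic (blaschkeQuotientArg z w) (2 * Real.pi) := fun θ => by
  simp only [blaschkeQuotientArg, poissonArg_add_two_pi (hz _), poissonArg_add_two_pi (hw _),
    Finset.sum_add_distrib]
  ring

end BlaschkeQuotient

theorem quotient_blaschke_C1_approx_general
    (u : ℝ → ℝ) (hu_per : Function.Periodic u (2 * Real.pi)) (hu : ContDiff ℝ 1 u)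
    (ε : ℝ)
    (n : ℕ) (z w : Fin n → ℂ) (hz : ∀ k, ‖z k‖ < 1) (hw : ∀ k, ‖w k‖ < 1)
    (happrox : ∀ θ : ℝ,
      |deriv u θ - ∑ k, poissonK (z k) (Complex.exp (θ * Complex.I))
        + ∑ k, poissonK (w k) (Complex.exp (θ * Complex.I))| < ε) :
    ∃ σ : ℂ, ‖σ‖ = 1 ∧
      ∃ v : ℝ → ℝ, Function.Periodic v (2 * Real.pi) ∧ ContDiff ℝ 1 v ∧
        (∀ θ : ℝ, Complex.exp (v θ * Complex.I) =
          σ * ∏ k, ((Complex.exp (θ * Complex.I) - z k) /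
              (1 - conj (z k) * Complex.exp (θ * Complex.I))) *
            ((1 - conj (w k) * Complex.exp (θ * Complex.I)) /
              (Complex.exp (θ * Complex.I) - w k))) ∧
        ∃ a b : ℝ, a + b < (Real.pi + 1) * ε ∧
          (∀ θ : ℝ, |u θ - v θ| ≤ a) ∧ (∀ θ : ℝ, |deriv u θ - deriv v θ| ≤ b) := by
  set p : ℝ → ℝ := fun θ =>
    ∑ k, poissonK (z k) (exp (θ * I)) - ∑ k, poissonK (w k) (exp (θ * I))
  set v := fun θ => u 0 + blaschkeQuotientArg z w θ
  have hv : ∀ θ, HasDerivAt v (p θ) θ :=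
    fun θ => (hasDerivAt_blaschkeQuotientArg hz hw θ).const_add _
  have hv_cont : Continuous (deriv v) := by
    rw [funext fun θ => (hv θ).deriv]
    exact (continuous_finsetSum _ fun k _ => continuous_poissonK_exp (hz k)).sub
      (continuous_finsetSum _ fun k _ => continuous_poissonK_exp (hw k))
  have hv_per : Function.Periodic v (2 * Real.pi) := fun θ => by
    simp only [v, periodic_blaschkeQuotientArg hz hw θ]
  have hB1 : blaschkeQuotient z w 1 ≠ 0 :=
    norm_ne_zero_iff.mp (by rw [norm_blaschkeQuotient hz hw norm_one]; exact one_ne_zero)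
  obtain ⟨b, hbε, hb⟩ :=
    ((hu_per.deriv.sub hv_per.deriv).comp abs).exists_lt_forall_le_of_forall_lt
      Real.two_pi_pos.ne' ((hu.continuous_deriv le_rfl).sub hv_cont).abs
      fun θ => by simpa [(hv θ).deriv, sub_add] using happrox θ
  refine ⟨exp (u 0 * I) / blaschkeQuotient z w 1, ?_, v, hv_per,
    contDiff_one_iff_deriv.mpr ⟨fun θ => (hv θ).differentiableAt, hv_cont⟩, fun θ => ?_,
    Real.pi * b, b, by nlinarith [Real.pi_pos], fun θ => ?_, hb⟩
  · rw [norm_div, norm_exp_ofReal_mul_I, norm_blaschkeQuotient hz hw norm_one, div_one]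
  · rw [← blaschkeQuotient_eq_prod, blaschkeQuotient_exp_eq hz hw, ofReal_add, add_mul, exp_add]
    field_simp
  · simpa using (hu_per.sub hv_per).abs_le_of_abs_deriv_le Real.two_pi_pos
      (by simp [v, blaschkeQuotientArg_zero])
      (fun θ => (hu.differentiable one_ne_zero θ).hasDerivAt.sub
        (hv θ).differentiableAt.hasDerivAt) hb θ

/-- if the derivative of a `2π`-periodic `C¹` function `u` is within
`ε` of a difference of Poisson kernel sums, then `u` is within `(π+1)ε` in the `C¹`
norm of a continuous branch of the argument of the corresponding Blaschke quotient. -/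
theorem quotient_blaschke_C1_approx
    (u : ℝ → ℝ) (hu_per : Function.Periodic u (2 * Real.pi)) (hu : ContDiff ℝ 1 u)
    (ε : ℝ) (hε : 0 < ε)
    (n : ℕ) (z w : Fin n → ℂ) (hz : ∀ k, ‖z k‖ < 1) (hw : ∀ k, ‖w k‖ < 1)
    (happrox : ∀ θ : ℝ,
      |deriv u θ - ∑ k, poissonK (z k) (Complex.exp (θ * Complex.I))
        + ∑ k, poissonK (w k) (Complex.exp (θ * Complex.I))| < ε) :
    ∃ σ : ℂ, ‖σ‖ = 1 ∧
      ∃ v : ℝ → ℝ, Function.Periodic v (2 * Real.pi) ∧ ContDiff ℝ 1 v ∧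
        (∀ θ : ℝ, Complex.exp (v θ * Complex.I) =
          σ * ∏ k, ((Complex.exp (θ * Complex.I) - z k) /
              (1 - conj (z k) * Complex.exp (θ * Complex.I))) *
            ((1 - conj (w k) * Complex.exp (θ * Complex.I)) /
              (Complex.exp (θ * Complex.I) - w k))) ∧
        ∃ a b : ℝ, a + b < (Real.pi + 1) * ε ∧
          (∀ θ : ℝ, |u θ - v θ| ≤ a) ∧ (∀ θ : ℝ, |deriv u θ - deriv v θ| ≤ b) :=
  quotient_blaschke_C1_approx_general u hu_per hu ε n z w hz hw happrox
end

section
/- For every z₀ ∈ 𝔻 and every ε > 0 there exists n ∈ ℕ such that, setting z_k = z₀ exp(2πik/n) for k = 0, 1, …, n−1, one has |∑_{k=0}^{n−1} P(z_k, ζ) − n| < ε for all ζ ∈ 𝕋. -/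
open Complex MeasureTheory

/-!
On the unit circle the Poisson kernel is the real part of the Herglotz kernel `(ζ + z)/(ζ - z)`.
Since `∏ₖ (x - ωᵏ z₀) = xⁿ - z₀ⁿ` for a primitive `n`-th root of unity `ω`, taking logarithmic
derivatives shows that the Herglotz kernels at the rotated points `ωᵏ z₀` sum to `n` times the
Herglotz kernel at `z₀ⁿ`, evaluated at `ζⁿ`. Hence the sum in question is `n P(z₀ⁿ, ζⁿ)`, and the
Harnack-type bound `|P(w, ξ) - 1| ≤ 2|w|/(1 - |w|)` makes its distance to `n` at most
`2n|z₀|ⁿ/(1 - |z₀|ⁿ)`, which tends to `0`.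
-/

open Finset Filter Topology

namespace IsPrimitiveRoot

open Polynomial

variable {K : Type*} [Field K] {ω : K} {n : ℕ}

theorem sum_one_div_sub_pow_mul (hω : IsPrimitiveRoot ω n) (hn : 0 < n) {x a : K}
    (hxa : x ^ n ≠ a ^ n) :
    ∑ i ∈ range n, 1 / (x - ω ^ i * a) = n * x ^ (n - 1) / (x ^ n - a ^ n) := by
  have hprod : X ^ n - C (a ^ n) = ∏ i ∈ range n, (X - C (ω ^ i * a)) :=
    X_pow_sub_C_eq_prod hω hn rfl
  have hsplits : (X ^ n - C (a ^ n)).Splits := by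
    rw [hprod]; exact Splits.prod fun i _ => Splits.X_sub_C _
  have hroots : (X ^ n - C (a ^ n)).roots = (range n).val.map (ω ^ · * a) := by
    rw [hprod]
    simpa [Finset.prod_eq_multiset_prod, Multiset.map_map] using
      roots_multiset_prod_X_sub_C ((range n).val.map (ω ^ · * a))
  have heval : (X ^ n - C (a ^ n)).eval x ≠ 0 := by simpa [sub_eq_zero] using hxa
  have := hsplits.eval_derivative_div_eval_of_ne_zero heval
  rw [hroots, Multiset.map_map, derivative_sub, derivative_X_pow, derivative_C, sub_zero] at this
  simpa [Finset.sum_eq_multiset_sum] using this.symm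

theorem sum_add_div_sub_pow_mul (hω : IsPrimitiveRoot ω n) (hn : 0 < n) {x a : K}
    (hxa : x ^ n ≠ a ^ n) :
    ∑ i ∈ range n, (x + ω ^ i * a) / (x - ω ^ i * a) =
      n * (x ^ n + a ^ n) / (x ^ n - a ^ n) := by
  have hne : ∀ i, x - ω ^ i * a ≠ 0 := fun i h => hxa <| by
    rw [sub_eq_zero.1 h, mul_pow, ← pow_mul, pow_mul', hω.pow_eq_one, one_pow, one_mul]
  calc ∑ i ∈ range n, (x + ω ^ i * a) / (x - ω ^ i * a)
      = ∑ i ∈ range n, (2 * x * (1 / (x - ω ^ i * a)) - 1) :=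
        sum_congr rfl fun i _ => by field_simp [hne i]; ring
    _ = 2 * x * (n * x ^ (n - 1) / (x ^ n - a ^ n)) - n := by
        rw [sum_sub_distrib, ← mul_sum, hω.sum_one_div_sub_pow_mul hn hxa]; simp
    _ = n * (x ^ n + a ^ n) / (x ^ n - a ^ n) := by
        obtain ⟨m, rfl⟩ := Nat.exists_eq_add_one_of_ne_zero hn.ne'
        field_simp [sub_ne_zero.2 hxa]
        rw [Nat.add_sub_cancel]
        ring

end IsPrimitiveRoot

theorem poissonK_eq_re_add_div_sub {ζ : ℂ} (hζ : ‖ζ‖ = 1) (z : ℂ) :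
    poissonK z ζ = ((ζ + z) / (ζ - z)).re := by
  have hζ' : ζ.re * ζ.re + ζ.im * ζ.im = 1 := by
    rw [← normSq_apply, ← Complex.sq_norm, hζ, one_pow]
  rw [poissonK, div_re, ← add_div, Complex.sq_norm, Complex.sq_norm]
  congr 1
  simp only [normSq_apply, add_re, add_im, sub_re, sub_im]
  linear_combination -hζ'

theorem sum_poissonK_rotations {ζ : ℂ} (hζ : ‖ζ‖ = 1) {z₀ : ℂ} (hz₀ : ‖z₀‖ ≠ 1) {n : ℕ}
    (hn : 0 < n) :
    ∑ k : Fin n, poissonK (z₀ * exp (2 * Real.pi * I * k / n)) ζ =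
      n * poissonK (z₀ ^ n) (ζ ^ n) := by
  set ω := exp (2 * Real.pi * I / n)
  have hω : IsPrimitiveRoot ω n := isPrimitiveRoot_exp n hn.ne'
  have hrot (k : ℕ) : z₀ * exp (2 * Real.pi * I * k / n) = ω ^ k * z₀ := by
    rw [← exp_nat_mul, mul_comm]; ring_nf
  have hζn : ‖ζ ^ n‖ = 1 := by rw [norm_pow, hζ, one_pow]
  have hxa : ζ ^ n ≠ z₀ ^ n := fun h => hz₀ <| by
    rwa [h, norm_pow, pow_eq_one_iff_of_nonneg (norm_nonneg _) hn.ne'] at hζn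
  calc ∑ k : Fin n, poissonK (z₀ * exp (2 * Real.pi * I * k / n)) ζ
      = ∑ k ∈ range n, ((ζ + ω ^ k * z₀) / (ζ - ω ^ k * z₀)).re := by
        rw [Fin.sum_univ_eq_sum_range (fun k => poissonK (z₀ * exp (2 * Real.pi * I * k / n)) ζ)]
        simp only [hrot, poissonK_eq_re_add_div_sub hζ]
    _ = (n * (ζ ^ n + z₀ ^ n) / (ζ ^ n - z₀ ^ n)).re := by
        rw [← re_sum, hω.sum_add_div_sub_pow_mul hn hxa]
    _ = n * poissonK (z₀ ^ n) (ζ ^ n) := by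
        rw [poissonK_eq_re_add_div_sub hζn, mul_div_assoc, ← ofReal_natCast, re_ofReal_mul]

theorem abs_poissonK_sub_one_le {ξ : ℂ} (hξ : ‖ξ‖ = 1) {w : ℂ} (hw : ‖w‖ < 1) :
    |poissonK w ξ - 1| ≤ 2 * ‖w‖ / (1 - ‖w‖) := by
  have hne : ξ - w ≠ 0 := sub_ne_zero.2 fun h => hw.ne (h ▸ hξ)
  have hsub : (ξ + w) / (ξ - w) - 1 = 2 * w / (ξ - w) := by field_simp; ring
  have hdist : 1 - ‖w‖ ≤ ‖ξ - w‖ := hξ ▸ norm_sub_norm_le ξ w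
  calc |poissonK w ξ - 1| = |(2 * w / (ξ - w)).re| := by
        rw [poissonK_eq_re_add_div_sub hξ, ← hsub, sub_re, one_re]
    _ ≤ ‖2 * w / (ξ - w)‖ := abs_re_le_norm _
    _ = 2 * ‖w‖ / ‖ξ - w‖ := by rw [norm_div, norm_mul, Complex.norm_two]
    _ ≤ 2 * ‖w‖ / (1 - ‖w‖) := by gcongr

/-- for `z₀` in the disk, the sum of Poisson kernels over the rotated
points `z_k = z₀ exp(2πik/n)` is uniformly close to `n` on the circle for large `n`. -/
theorem poisson_sum_rotated_points
    (z₀ : ℂ) (hz₀ : ‖z₀‖ < 1) (ε : ℝ) (hε : 0 < ε) :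
    ∃ n : ℕ, 0 < n ∧ ∀ ζ : ℂ, ‖ζ‖ = 1 →
      |(∑ k : Fin n, poissonK (z₀ * Complex.exp (2 * Real.pi * Complex.I * k / n)) ζ)
        - (n : ℝ)| < ε := by
  set r := ‖z₀‖
  have hlim : Tendsto (fun n : ℕ => n * (2 * r ^ n / (1 - r ^ n))) atTop (𝓝 0) := by
    have h := ((tendsto_self_mul_const_pow_of_lt_one (norm_nonneg _) hz₀).const_mul 2).div
      (tendsto_const_nhds.sub (tendsto_pow_atTop_nhds_zero_of_lt_one (norm_nonneg _) hz₀))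
      (by norm_num : (1 : ℝ) - 0 ≠ 0)
    rw [mul_zero, zero_div] at h
    exact h.congr fun n => by simp only [Pi.div_apply]; ring
  obtain ⟨n, hsmall, hn⟩ :=
    ((hlim.eventually (gt_mem_nhds hε)).and (eventually_gt_atTop 0)).exists
  refine ⟨n, hn, fun ζ hζ => ?_⟩
  have hζn : ‖ζ ^ n‖ = 1 := by rw [norm_pow, hζ, one_pow]
  have hzn : ‖z₀ ^ n‖ < 1 := by rw [norm_pow]; exact pow_lt_one₀ (norm_nonneg _) hz₀ hn.ne'
  rw [sum_poissonK_rotations hζ hz₀.ne hn, ← mul_sub_one, abs_mul, Nat.abs_cast]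
  calc n * |poissonK (z₀ ^ n) (ζ ^ n) - 1| ≤ n * (2 * ‖z₀ ^ n‖ / (1 - ‖z₀ ^ n‖)) := by
        gcongr; exact abs_poissonK_sub_one_le hζn hzn
    _ < ε := by rwa [norm_pow]
end

section
/- Let h : 𝕋 → ℝ be continuous with ∫₀^{2π} h(e^{iθ}) dθ = 0. Then for every ε > 0 there exist n ∈ ℕ and points z₁,…,z_n ∈ 𝔻 such that |h(ζ) − ∑_{k=1}^{n} P(z_k, ζ) + n| < ε for all ζ ∈ 𝕋. -/
/-!
For `w = z ζ̄` one has `P(z, ζ) = Re ((1 + w) / (1 - w))`, so a pole `a` near `0` contributes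
`P(a, ζ) - 1 = 2 Re (a ζ̄) + O(|a|²)`: `N` copies of the pole `c̄ / (2N)` approximate `Re (c ζ)`
with error `O(|c|² / N)`. Replacing every pole `z` by the `m` points `ω^j s`, where `s^m = z` and
`ω` is a primitive `m`-th root of unity, turns `P(z, ζ^m)` into `(1/m) ∑_j P(ω^j s, ζ)`, so
`Re (c ζ^m)`, and by conjugation `Re (c ζ^{-m})`, are approximable too, hence so is every
trigonometric polynomial without constant term. A continuous `h` is uniformly close to a
trigonometric polynomial, whose constant term is then as small as the error because `h` has
mean zero.
-/

open Complex MeasureTheory intervalIntegral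

open Finset ComplexConjugate

theorem one_add_div_one_sub_eq_geom_sum {K : Type*} [Field K] {a : K} {m : ℕ} (ha : a ^ m ≠ 1) :
    (1 + a) / (1 - a) = (1 + a ^ m + 2 * ∑ i ∈ Ico 1 m, a ^ i) / (1 - a ^ m) := by
  have ha1 : 1 - a ≠ 0 := sub_ne_zero.mpr fun h => ha (by rw [← h, one_pow])
  rw [div_eq_div_iff ha1 (sub_ne_zero.mpr (Ne.symm ha))]
  have hm : 1 ≤ m := Nat.one_le_iff_ne_zero.mpr fun h => ha (by rw [h, pow_zero])
  linear_combination (2 : K) * geom_sum_Ico_mul a hm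

namespace IsPrimitiveRoot

variable {K : Type*} [Field K] {ω : K} {m : ℕ}

theorem geom_sum_pow_eq_zero (hω : IsPrimitiveRoot ω m) {i : ℕ} (hi : ¬ m ∣ i) :
    ∑ j ∈ range m, (ω ^ i) ^ j = 0 := by
  have hne : ω ^ i ≠ 1 := fun h => hi (hω.pow_eq_one_iff_dvd i |>.mp h)
  rw [geom_sum_eq hne, ← pow_mul, mul_comm, pow_mul, hω.pow_eq_one, one_pow, sub_self,
    zero_div]

theorem sum_one_add_div_one_sub (hω : IsPrimitiveRoot ω m) {u : K} (hu : u ^ m ≠ 1) :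
    ∑ j ∈ range m, (1 + ω ^ j * u) / (1 - ω ^ j * u) = m * ((1 + u ^ m) / (1 - u ^ m)) := by
  have hpow (j : ℕ) : (ω ^ j * u) ^ m = u ^ m := by
    rw [mul_pow, pow_right_comm, hω.pow_eq_one, one_pow, one_mul]
  have hvanish : ∀ i ∈ Ico 1 m, ∑ j ∈ range m, (ω ^ j * u) ^ i = 0 := by
    intro i hi
    obtain ⟨hi0, him⟩ := mem_Ico.mp hi
    simp_rw [mul_pow, ← sum_mul, pow_right_comm ω _ i]
    rw [hω.geom_sum_pow_eq_zero (Nat.not_dvd_of_pos_of_lt hi0 him), zero_mul]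
  calc ∑ j ∈ range m, (1 + ω ^ j * u) / (1 - ω ^ j * u)
      = ∑ j ∈ range m, (1 + u ^ m + 2 * ∑ i ∈ Ico 1 m, (ω ^ j * u) ^ i) / (1 - u ^ m) :=
        sum_congr rfl fun j _ => by rw [one_add_div_one_sub_eq_geom_sum (by rwa [hpow]), hpow]
    _ = (m * (1 + u ^ m) + 2 * ∑ i ∈ Ico 1 m, ∑ j ∈ range m, (ω ^ j * u) ^ i) / (1 - u ^ m) := by
        rw [← sum_div, sum_add_distrib, ← mul_sum, sum_comm, sum_const, card_range, nsmul_eq_mul]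
    _ = m * ((1 + u ^ m) / (1 - u ^ m)) := by rw [sum_eq_zero hvanish]; ring

end IsPrimitiveRoot

theorem Complex.re_one_add_div_one_sub (w : ℂ) :
    ((1 + w) / (1 - w)).re = (1 - ‖w‖ ^ 2) / ‖1 - w‖ ^ 2 := by
  rw [div_re, ← add_div, normSq_eq_norm_sq, ← normSq_eq_norm_sq w, normSq_apply]
  simp only [add_re, sub_re, one_re, add_im, sub_im, one_im]
  ring

theorem poissonK_eq_re (z : ℂ) {ζ : ℂ} (hζ : ‖ζ‖ = 1) :
    poissonK z ζ = ((1 + z * conj ζ) / (1 - z * conj ζ)).re := by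
  have hζζ : ζ * conj ζ = 1 := by rw [mul_conj, normSq_eq_norm_sq, hζ]; norm_num
  have hsub : ζ - z = ζ * (1 - z * conj ζ) := by linear_combination z * hζζ
  rw [re_one_add_div_one_sub, poissonK, hsub, norm_mul, norm_mul, norm_conj, hζ, one_mul,
    mul_one]

theorem abs_poissonK_sub_one_sub_le {z ζ : ℂ} (hz : ‖z‖ < 1) (hζ : ‖ζ‖ = 1) :
    |poissonK z ζ - 1 - 2 * (z * conj ζ).re| ≤ 2 * ‖z‖ ^ 2 / (1 - ‖z‖) := by
  set w := z * conj ζ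
  have hw : ‖w‖ = ‖z‖ := by rw [norm_mul, norm_conj, hζ, mul_one]
  have hw1 : 1 - w ≠ 0 := sub_ne_zero.mpr fun h => by rw [← h, norm_one] at hw; linarith
  have key : (1 + w) / (1 - w) - 1 - 2 * w = 2 * w ^ 2 / (1 - w) := by field_simp; ring
  rw [poissonK_eq_re z hζ, ← hw]
  calc |((1 + w) / (1 - w)).re - 1 - 2 * w.re|
      = |((1 + w) / (1 - w) - 1 - 2 * w).re| := by simp
    _ ≤ ‖(1 + w) / (1 - w) - 1 - 2 * w‖ := abs_re_le_norm _
    _ = 2 * ‖w‖ ^ 2 / ‖1 - w‖ := by rw [key, norm_div, norm_mul, norm_pow]; norm_num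
    _ ≤ 2 * ‖w‖ ^ 2 / (1 - ‖w‖) := by
        gcongr
        · linarith
        · simpa using norm_sub_norm_le (1 : ℂ) w

theorem IsPrimitiveRoot.sum_poissonK_mul {ω : ℂ} {m : ℕ} (hω : IsPrimitiveRoot ω m) {s ζ : ℂ}
    (hζ : ‖ζ‖ = 1) (hs : s ^ m ≠ ζ ^ m) :
    ∑ j ∈ range m, poissonK (ω ^ j * s) ζ = m * poissonK (s ^ m) (ζ ^ m) := by
  have hζζ : conj ζ * ζ = 1 := by rw [conj_mul', hζ]; norm_num
  have hu : (s * conj ζ) ^ m ≠ 1 := fun h => hs <| by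
    rw [← mul_one (s ^ m), ← one_pow m, ← hζζ, mul_pow, ← mul_assoc, ← mul_pow, h, one_mul]
  simp_rw [poissonK_eq_re _ hζ, poissonK_eq_re _ (by rw [norm_pow, hζ, one_pow] : ‖ζ ^ m‖ = 1),
    mul_assoc, map_pow, ← mul_pow]
  rw [← re_sum, hω.sum_one_add_div_one_sub hu, ← ofReal_natCast, re_ofReal_mul]

def PoissonApprox (f : ℂ → ℝ) (δ : ℝ) : Prop :=
  ∃ Z : Multiset ℂ, (∀ z ∈ Z, ‖z‖ < 1) ∧
    ∀ ζ : ℂ, ‖ζ‖ = 1 → |f ζ - (Z.map fun z => poissonK z ζ - 1).sum| ≤ δ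

namespace PoissonApprox

variable {f g : ℂ → ℝ} {δ δ' : ℝ}

theorem zero (hδ : 0 ≤ δ) : PoissonApprox (fun _ => 0) δ :=
  ⟨0, by simp, fun ζ _ => by simpa using hδ⟩

theorem of_abs_sub_le {η : ℝ} (hg : PoissonApprox g δ) (hfg : ∀ ζ, ‖ζ‖ = 1 → |f ζ - g ζ| ≤ η) :
    PoissonApprox f (η + δ) := by
  obtain ⟨Z, hZ, hg⟩ := hg
  refine ⟨Z, hZ, fun ζ hζ => ?_⟩
  calc _ ≤ |f ζ - g ζ| + |g ζ - (Z.map fun z => poissonK z ζ - 1).sum| := abs_sub_le _ _ _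
    _ ≤ η + δ := add_le_add (hfg ζ hζ) (hg ζ hζ)

theorem congr (hf : PoissonApprox f δ) (hfg : ∀ ζ, ‖ζ‖ = 1 → f ζ = g ζ) (hδ : δ ≤ δ') :
    PoissonApprox g δ' := by
  simpa using (hf.of_abs_sub_le (f := g) (η := δ' - δ) fun ζ hζ => by simp [hfg ζ hζ, hδ])

theorem add (hf : PoissonApprox f δ) (hg : PoissonApprox g δ') :
    PoissonApprox (fun ζ => f ζ + g ζ) (δ + δ') := by
  obtain ⟨Z, hZ, hf⟩ := hf
  obtain ⟨Z', hZ', hg⟩ := hg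
  refine ⟨Z + Z', fun z hz => (Multiset.mem_add.mp hz).elim (hZ z) (hZ' z), fun ζ hζ => ?_⟩
  rw [Multiset.map_add, Multiset.sum_add, add_sub_add_comm]
  exact (abs_add_le _ _).trans (add_le_add (hf ζ hζ) (hg ζ hζ))

theorem comp_pow (hf : PoissonApprox f δ) {m : ℕ} (hm : 0 < m) :
    PoissonApprox (fun ζ => m * f (ζ ^ m)) (m * δ) := by
  obtain ⟨Z, hZ, hf⟩ := hf
  choose r hr using fun z : ℂ => IsAlgClosed.exists_pow_nat_eq z hm
  have hω := Complex.isPrimitiveRoot_exp m hm.ne'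
  set ω := Complex.exp (2 * Real.pi * I / m)
  have hr_norm (z : ℂ) : ‖r z‖ ^ m = ‖z‖ := by rw [← norm_pow, hr]
  refine ⟨Z.bind fun z => (range m).val.map fun j => ω ^ j * r z, ?_, fun ζ hζ => ?_⟩
  · simp only [Multiset.mem_bind, Multiset.mem_map]
    rintro _ ⟨z, hz, j, -, rfl⟩
    rw [norm_mul, norm_pow, hω.norm'_eq_one hm.ne', one_pow, one_mul,
      ← pow_lt_one_iff_of_nonneg (norm_nonneg _) hm.ne', hr_norm]
    exact hZ z hz
  have hζm : ‖ζ ^ m‖ = 1 := by rw [norm_pow, hζ, one_pow]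
  have hfiber : ∀ z ∈ Z, (((range m).val.map fun j => ω ^ j * r z).map
      fun w => poissonK w ζ - 1).sum = m * (poissonK z (ζ ^ m) - 1) := by
    intro z hz
    have hne : r z ^ m ≠ ζ ^ m := fun h => by
      have := congrArg norm h; rw [hr, hζm] at this; linarith [hZ z hz]
    rw [Multiset.map_map, ← Finset.sum_eq_multiset_sum]
    simp only [Function.comp_apply, sum_sub_distrib, hω.sum_poissonK_mul hζ hne, hr,
      sum_const, card_range, nsmul_eq_mul]
    ring
  rw [Multiset.map_bind, Multiset.sum_bind, Multiset.map_congr rfl hfiber,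
    Multiset.sum_map_mul_left, ← mul_sub, abs_mul, Nat.abs_cast]
  exact mul_le_mul_of_nonneg_left (hf _ hζm) m.cast_nonneg

theorem exists_fin (hf : PoissonApprox f δ) :
    ∃ (n : ℕ) (z : Fin n → ℂ), (∀ k, ‖z k‖ < 1) ∧
      ∀ ζ : ℂ, ‖ζ‖ = 1 → |f ζ - ∑ k, poissonK (z k) ζ + n| ≤ δ := by
  obtain ⟨Z, hZ, hf⟩ := hf
  refine ⟨Z.toList.length, fun k => Z.toList[k.1],
    fun k => hZ _ (Multiset.mem_toList.mp (List.getElem_mem _)), fun ζ hζ => ?_⟩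
  have hsum : (Z.map fun z => poissonK z ζ - 1).sum
      = ∑ k : Fin Z.toList.length, poissonK Z.toList[k.1] ζ - Z.toList.length := by
    conv_lhs => rw [← Multiset.coe_toList Z, Multiset.map_coe, Multiset.sum_coe,
      ← Fin.sum_univ_fun_getElem]
    rw [sum_sub_distrib]
    simp
  rw [sub_add]
  simpa only [hsum] using hf ζ hζ

end PoissonApprox

theorem poissonApprox_re_mul (c : ℂ) {δ : ℝ} (hδ : 0 < δ) :
    PoissonApprox (fun ζ => (c * ζ).re) δ := by
  obtain ⟨N, hN⟩ := exists_nat_gt (‖c‖ + ‖c‖ ^ 2 / δ)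
  have hcδ : ‖c‖ ^ 2 / δ < N := by linarith [norm_nonneg c]
  have hN : (0 : ℝ) < N := by linarith [norm_nonneg c, div_nonneg (sq_nonneg ‖c‖) hδ.le]
  set a := conj c / (2 * N)
  have ha : ‖a‖ = ‖c‖ / (2 * N) := by
    rw [norm_div, norm_conj, norm_mul, Complex.norm_natCast, Complex.norm_two]
  have ha_half : ‖a‖ ≤ 1 / 2 := by
    rw [ha, div_le_iff₀ (by positivity)]; linarith [div_nonneg (sq_nonneg ‖c‖) hδ.le]
  refine ⟨Multiset.replicate N a, fun z hz => by
    rw [Multiset.eq_of_mem_replicate hz]; linarith, fun ζ hζ => ?_⟩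
  have hlin : (c * ζ).re = N * (2 * (a * conj ζ).re) := by
    have hN' : (N : ℂ) ≠ 0 := by exact_mod_cast hN.ne'
    have : conj (c * ζ) = ((2 * N : ℝ) : ℂ) * (a * conj ζ) := by
      push_cast; rw [map_mul]; simp only [a]; field_simp
    rw [← conj_re, this, re_ofReal_mul]; ring
  dsimp only
  rw [Multiset.map_replicate, Multiset.sum_replicate, nsmul_eq_mul, hlin, ← mul_sub, abs_mul,
    Nat.abs_cast, abs_sub_comm]
  calc N * |poissonK a ζ - 1 - 2 * (a * conj ζ).re| ≤ N * (2 * ‖a‖ ^ 2 / (1 - ‖a‖)) := by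
        gcongr; exact abs_poissonK_sub_one_sub_le (by linarith) hζ
    _ ≤ N * (4 * ‖a‖ ^ 2) := by
        gcongr; rw [div_le_iff₀ (by linarith)]; nlinarith [sq_nonneg ‖a‖]
    _ = ‖c‖ ^ 2 / N := by rw [ha]; field_simp; ring
    _ ≤ δ := by rw [div_le_iff₀ hN]; linarith [(div_lt_iff₀ hδ).mp hcδ]

theorem poissonApprox_re_mul_zpow (c : ℂ) {n : ℤ} (hn : n ≠ 0) {δ : ℝ} (hδ : 0 < δ) :
    PoissonApprox (fun ζ => (c * ζ ^ n).re) δ := by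
  have hnat (c : ℂ) {m : ℕ} (hm : 0 < m) : PoissonApprox (fun ζ => (c * ζ ^ m).re) δ := by
    have hm' : (m : ℝ) ≠ 0 := by positivity
    refine ((poissonApprox_re_mul (c / m) (div_pos hδ (by positivity))).comp_pow hm).congr
      (fun ζ _ => ?_) (mul_div_cancel₀ δ hm').le
    rw [← re_ofReal_mul, ofReal_natCast, ← mul_assoc, mul_div_cancel₀ _ (by exact_mod_cast hm')]
  obtain ⟨m, rfl | rfl⟩ := Int.eq_nat_or_neg n
  · exact (hnat c (m := m) (by omega)).congr (fun ζ _ => by rw [zpow_natCast]) le_rfl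
  · refine (hnat (conj c) (m := m) (by omega)).congr (fun ζ hζ => ?_) le_rfl
    have hinv : conj ζ = ζ⁻¹ := eq_inv_of_mul_eq_one_left (by rw [conj_mul', hζ]; norm_num)
    rw [← conj_re, map_mul, conj_conj, map_pow, hinv, zpow_neg, zpow_natCast, inv_pow]

theorem poissonApprox_finsetSum {ι : Type*} (s : Finset ι) {f : ι → ℂ → ℝ}
    (hf : ∀ i ∈ s, ∀ δ > 0, PoissonApprox (f i) δ) {δ : ℝ} (hδ : 0 < δ) :
    PoissonApprox (fun ζ => ∑ i ∈ s, f i ζ) δ := by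
  classical
  induction s using Finset.induction_on generalizing δ with
  | empty => simpa using PoissonApprox.zero hδ.le
  | insert a s ha ih =>
    exact ((hf a (mem_insert_self a s) _ (half_pos hδ)).add
      (ih (fun i hi => hf i (mem_insert_of_mem hi)) (half_pos hδ))).congr
      (fun ζ _ => by rw [sum_insert ha]) (by linarith)

section Fourier

open AddCircle

variable {T : ℝ} [Fact (0 < T)]

theorem ContinuousMap.integrable_haarAddCircle (f : C(AddCircle T, ℂ)) :
    Integrable f haarAddCircle :=
  f.continuous.integrable_of_hasCompactSupport (HasCompactSupport.of_compactSpace _)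

theorem norm_fourierCoeff_le_norm (f : C(AddCircle T, ℂ)) (n : ℤ) :
    ‖fourierCoeff f n‖ ≤ ‖f‖ := by
  calc ‖fourierCoeff f n‖ ≤ ‖f‖ * haarAddCircle.real (Set.univ : Set (AddCircle T)) :=
        norm_integral_le_of_norm_le_const <| ae_of_all _ fun t => by
          rw [norm_smul, fourier_apply, Circle.norm_coe, one_mul]
          exact f.norm_coe_le_norm t
    _ = ‖f‖ := by simp

theorem fourierCoeff_finsupp_sum_smul_fourier (c : ℤ →₀ ℂ) (n : ℤ) :
    fourierCoeff (⇑(c.sum fun k a => a • fourier (T := T) k)) n = c n := by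
  rw [Finsupp.sum, ContinuousMap.coe_sum,
    fourierCoeff.sum _ _ fun k _ => (c k • fourier k).integrable_haarAddCircle]
  simp [fourierCoeff.const_smul, fourierCoeff_fourier, Pi.single_apply, eq_comm]

theorem exists_finsupp_norm_sub_sum_fourier_lt (F : C(AddCircle T, ℂ))
    (hF : fourierCoeff F 0 = 0) {ε : ℝ} (hε : 0 < ε) :
    ∃ c : ℤ →₀ ℂ, c 0 = 0 ∧ ∀ x, ‖F x - c.sum fun n a => a * fourier n x‖ < ε := by
  have hF_mem : F ∈ (Submodule.span ℂ (Set.range (fourier (T := T)))).topologicalClosure := by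
    rw [span_fourier_closure_eq_top]; trivial
  obtain ⟨g, hg, hFg⟩ := Metric.mem_closure_iff.mp hF_mem (ε / 2) (half_pos hε)
  obtain ⟨c, rfl⟩ := Finsupp.mem_span_range_iff_exists_finsupp.mp hg
  set g := c.sum fun k a => a • fourier (T := T) k
  have hc0 : ‖c 0‖ ≤ dist F g := by
    have hcoeff := congrFun (fourierCoeff.add (g - F).integrable_haarAddCircle
      F.integrable_haarAddCircle) 0
    rw [ContinuousMap.coe_sub, sub_add_cancel, Pi.add_apply, hF, add_zero,
      fourierCoeff_finsupp_sum_smul_fourier] at hcoeff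
    rw [hcoeff, dist_comm, dist_eq_norm]
    exact norm_fourierCoeff_le_norm (g - F) 0
  refine ⟨c.erase 0, Finsupp.erase_same, fun x => ?_⟩
  have hgx : g x = c 0 * fourier 0 x + (c.erase 0).sum fun n a => a * fourier n x := by
    rw [Finsupp.add_sum_erase' c 0 (fun n a => a * fourier n x) fun _ => zero_mul _]
    simp [g, Finsupp.sum]
  rw [fourier_zero (T := T), mul_one] at hgx
  calc ‖F x - (c.erase 0).sum fun n a => a * fourier n x‖ = ‖(F x - g x) + c 0‖ := by
        rw [hgx]; ring_nf
    _ ≤ dist F g + dist F g :=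
        (norm_add_le _ _).trans <| add_le_add
          (by rw [← dist_eq_norm]; exact ContinuousMap.dist_apply_le_dist x) hc0
    _ < ε := by linarith

end Fourier

theorem exists_finsupp_abs_sub_sum_re_mul_zpow_lt (h : ℂ → ℝ)
    (hcont : ContinuousOn h (Metric.sphere 0 1))
    (hmean : ∫ θ in (0 : ℝ)..2 * Real.pi, h (exp (θ * I)) = 0) {ε : ℝ} (hε : 0 < ε) :
    ∃ c : ℤ →₀ ℂ, c 0 = 0 ∧ ∀ ζ : ℂ, ‖ζ‖ = 1 → |h ζ - c.sum fun n a => (a * ζ ^ n).re| < ε := by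
  have : Fact (0 < 2 * Real.pi) := ⟨Real.two_pi_pos⟩
  let F : C(AddCircle (2 * Real.pi), ℂ) :=
    ⟨fun x => h (AddCircle.toCircle x), continuous_ofReal.comp <| hcont.comp_continuous
      (by fun_prop) fun x => by simp [Circle.norm_coe]⟩
  have htoCircle (θ : ℝ) :
      (AddCircle.toCircle (θ : AddCircle (2 * Real.pi)) : ℂ) = exp (θ * I) := by
    simp [AddCircle.toCircle_apply_mk, Circle.coe_exp, Real.pi_ne_zero]
  have hF_coe (θ : ℝ) : F θ = h (exp (θ * I)) := by simp [F, htoCircle]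
  have hF0 : fourierCoeff F 0 = 0 := by
    simp [fourierCoeff_eq_intervalIntegral F 0 0, hF_coe, integral_ofReal, hmean]
  obtain ⟨c, hc0, hc⟩ := exists_finsupp_norm_sub_sum_fourier_lt F hF0 hε
  refine ⟨c, hc0, fun ζ hζ => ?_⟩
  obtain ⟨x, hx⟩ : ∃ x : AddCircle (2 * Real.pi), (AddCircle.toCircle x : ℂ) = ζ :=
    ⟨arg ζ, by simpa [htoCircle, hζ] using norm_mul_exp_arg_mul_I ζ⟩
  have hfourier (n : ℤ) : fourier n x = ζ ^ n := by
    rw [fourier_apply, AddCircle.toCircle_zsmul, Circle.coe_zpow, hx]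
  calc |h ζ - c.sum fun n a => (a * ζ ^ n).re|
      = |(F x - c.sum fun n a => a * fourier n x).re| := by
        simp [F, hx, hfourier, Finsupp.sum, re_sum]
    _ ≤ ‖F x - c.sum fun n a => a * fourier n x‖ := abs_re_le_norm _
    _ < ε := hc x

/-- a continuous function on the circle with zero mean is uniformly
approximated by `∑ P(z_k, ·) − n` with all poles `z_k` in the disk. -/
theorem approx_by_poisson_minus_constant
    (h : ℂ → ℝ) (hcont : ContinuousOn h (Metric.sphere (0 : ℂ) 1))
    (hmean : ∫ θ in (0:ℝ)..(2 * Real.pi), h (Complex.exp (θ * Complex.I)) = 0)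
    (ε : ℝ) (hε : 0 < ε) :
    ∃ (n : ℕ) (z : Fin n → ℂ), (∀ k, ‖z k‖ < 1) ∧
      ∀ ζ : ℂ, ‖ζ‖ = 1 → |h ζ - ∑ k, poissonK (z k) ζ + (n : ℝ)| < ε := by
  obtain ⟨c, hc0, hc⟩ := exists_finsupp_abs_sub_sum_re_mul_zpow_lt h hcont hmean (half_pos hε)
  have hpoly : PoissonApprox (fun ζ => c.sum fun n a => (a * ζ ^ n).re) (ε / 4) :=
    poissonApprox_finsetSum c.support (fun n hn _ => poissonApprox_re_mul_zpow (c n)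
      fun hn0 => Finsupp.mem_support_iff.mp hn (by rw [hn0, hc0])) (by positivity)
  obtain ⟨n, z, hz, happrox⟩ := (hpoly.of_abs_sub_le fun ζ hζ => (hc ζ hζ).le).exists_fin
  exact ⟨n, z, hz, fun ζ hζ => (happrox ζ hζ).trans_lt (by linarith)⟩
end

section
/- For every N ∈ ℕ there exists a continuous injective map f : 𝕋 → ℂ such that f̂(n) = 0 for all integers n with |n| ≤ N. -/
open Complex MeasureTheory intervalIntegral

/-!
Take `f z = z * Φ (Re (z ^ m))` with `m = N + 2`. On the unit circle `‖f z‖ = ‖Φ (Re (z ^ m))‖`,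
so `f` is injective there as soon as `‖Φ‖` is injective on `[-1, 1]` and `Φ` does not vanish.
At `z = e^{iθ}` the `n`-th Fourier integrand is `e^{i(1-n)θ} F (mθ)` with `F = Φ ∘ cos`; as
`F (m ·)` has period `2π / m`, the integral vanishes unless `m ∣ 1 - n`, which for `|n| ≤ N`
leaves only `n = 1`, where it is the mean of `F`. The profile
`Φ c = (2 + c) e^{i(2 arccos c + √(1 - c²))}` has `‖Φ c‖ = 2 + c` and `F` has mean zero.
-/

open scoped Real
open Set Function Metric

theorem Function.Periodic.intervalIntegral_eq_zero_of_add_eq_mul {H : ℝ → ℂ} {T c : ℝ} {ω : ℂ}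
    (hH : Periodic H T) (hshift : ∀ θ, H (θ + c) = ω * H θ) (hω : ω ≠ 1) :
    ∫ θ in 0..T, H θ = 0 := by
  have hshifted : ∫ θ in 0..T, H (θ + c) = ∫ θ in 0..T, H θ := by
    rw [integral_comp_add_right, zero_add, add_comm T, hH.intervalIntegral_add_eq c 0, zero_add]
  simp_rw [hshift, intervalIntegral.integral_const_mul] at hshifted
  have : (ω - 1) * ∫ θ in 0..T, H θ = 0 := by rw [sub_mul, hshifted, one_mul, sub_self]
  exact (mul_eq_zero.mp this).resolve_left (sub_ne_zero.mpr hω)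

theorem integral_exp_int_mul_mul_eq_zero {g : ℝ → ℂ} {m : ℕ} (hm : m ≠ 0)
    (hg : Periodic g (2 * π / m)) {k : ℤ} (hk : ¬ (m : ℤ) ∣ k) :
    ∫ θ in 0..2 * π, exp (k * θ * I) * g θ = 0 := by
  have hg' : Periodic g (2 * π) := by
    simpa [nsmul_eq_mul, mul_div_cancel₀ _ (Nat.cast_ne_zero.mpr hm : (m : ℝ) ≠ 0)] using
      hg.nsmul m
  refine Periodic.intervalIntegral_eq_zero_of_add_eq_mul (c := 2 * π / m)
    (ω := exp (2 * π * I / m) ^ k) (fun θ => ?_) (fun θ => ?_) ?_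
  · rw [hg' θ, ofReal_add, mul_add, add_mul, exp_add,
      show (k : ℂ) * ↑(2 * π) * I = k * (2 * π * I) by push_cast; ring,
      exp_int_mul_two_pi_mul_I, mul_one]
  · rw [hg θ, ← exp_int_mul, ← mul_assoc, ← exp_add]
    congr 2
    push_cast
    ring
  · exact fun h => hk (((isPrimitiveRoot_exp m hm).zpow_eq_one_iff_dvd k).mp h)

section

variable {E : Type*} [NormedAddCommGroup E] [NormedSpace ℝ E]

theorem Function.Periodic.intervalIntegral_comp_nat_mul {F : ℝ → E} {T : ℝ}
    (hper : Periodic F T) (hF : Continuous F) {m : ℕ} (hm : m ≠ 0) :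
    ∫ θ in 0..T, F (m * θ) = ∫ s in 0..T, F s := by
  have hm' : (m : ℝ) ≠ 0 := Nat.cast_ne_zero.mpr hm
  have := hper.intervalIntegral_add_zsmul_eq m 0 (fun _ _ => hF.intervalIntegrable _ _)
  simp only [zero_add, natCast_zsmul, nsmul_eq_mul] at this
  rw [← Nat.cast_smul_eq_nsmul ℝ] at this
  rw [integral_comp_mul_left F hm', mul_zero, this, inv_smul_smul₀ hm']

theorem integral_comp_cos_eq_two_smul {Φ : ℝ → E} (hΦ : Continuous Φ) :
    ∫ s in 0..2 * π, Φ (Real.cos s) = (2 : ℝ) • ∫ s in 0..π, Φ (Real.cos s) := by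
  have hcont : Continuous fun s => Φ (Real.cos s) := hΦ.comp Real.continuous_cos
  have hper : Periodic (fun s => Φ (Real.cos s)) (2 * π) := Real.cos_periodic.comp Φ
  rw [← zero_add (2 * π), hper.intervalIntegral_add_eq 0 (-π), show -π + 2 * π = π by ring,
    ← integral_add_adjacent_intervals (b := 0) (hcont.intervalIntegrable _ _)
      (hcont.intervalIntegrable _ _)]
  have heven : ∫ s in -π..0, Φ (Real.cos s) = ∫ s in 0..π, Φ (Real.cos s) := by
    rw [← neg_zero, ← integral_comp_neg]
    simp only [Real.cos_neg, neg_zero]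
  rw [heven, two_smul]

end

theorem fCoeff_mul_comp_re_pow (Φ : ℝ → ℂ) (m : ℕ) (n : ℤ) :
    fCoeff (fun z => z * Φ ((z ^ m).re)) n =
      (1 / (2 * π) : ℂ) * ∫ θ in 0..2 * π, exp (↑(1 - n) * θ * I) * Φ (Real.cos (m * θ)) := by
  unfold fCoeff
  congr 1
  refine integral_congr fun θ _ => ?_
  dsimp only
  have hpow : exp (θ * I) ^ m = exp (↑(m * θ) * I) := by
    rw [← exp_nat_mul]; push_cast; ring_nf
  rw [hpow, exp_ofReal_mul_I_re, mul_right_comm, ← exp_add]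
  push_cast
  ring_nf

theorem fCoeff_mul_comp_re_pow_eq_zero {Φ : ℝ → ℂ} (hΦ : Continuous Φ)
    (hmean : ∫ s in 0..2 * π, Φ (Real.cos s) = 0) {m : ℕ} {n : ℤ} (hn : |n - 1| < m) :
    fCoeff (fun z => z * Φ ((z ^ m).re)) n = 0 := by
  have hm : m ≠ 0 := by rintro rfl; exact (abs_nonneg _).not_gt hn
  rw [fCoeff_mul_comp_re_pow, mul_eq_zero]
  right
  by_cases hn1 : n = 1
  · subst hn1
    simp only [sub_self, Int.cast_zero, zero_mul, exp_zero, one_mul]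
    have hper : Periodic (fun s => Φ (Real.cos s)) (2 * π) := Real.cos_periodic.comp Φ
    rw [hper.intervalIntegral_comp_nat_mul (by fun_prop) hm, hmean]
  · refine integral_exp_int_mul_mul_eq_zero hm (fun θ => ?_) fun hdvd => hn1 ?_
    · rw [mul_add, mul_div_cancel₀ _ (Nat.cast_ne_zero.mpr hm), Real.cos_add_two_pi]
    · have := Int.eq_zero_of_abs_lt_dvd hdvd (by rwa [abs_sub_comm])
      omega

theorem injOn_mul_comp_re_pow {Φ : ℝ → ℂ} (hΦ : InjOn (‖Φ ·‖) (Icc (-1) 1))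
    (hΦ0 : ∀ c ∈ Icc (-1 : ℝ) 1, Φ c ≠ 0) (m : ℕ) :
    InjOn (fun z => z * Φ ((z ^ m).re)) (sphere 0 1) := by
  have hre : ∀ z ∈ sphere (0 : ℂ) 1, (z ^ m).re ∈ Icc (-1) 1 := fun z hz => by
    rw [mem_sphere_zero_iff_norm] at hz
    refine abs_le.mp ((abs_re_le_norm _).trans ?_)
    rw [norm_pow, hz, one_pow]
  intro z₁ hz₁ z₂ hz₂ heq
  have hnorm := congrArg norm heq
  simp only [norm_mul, mem_sphere_zero_iff_norm.mp hz₁, mem_sphere_zero_iff_norm.mp hz₂,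
    one_mul] at hnorm
  have hc : (z₁ ^ m).re = (z₂ ^ m).re := hΦ (hre z₁ hz₁) (hre z₂ hz₂) hnorm
  simp only [hc] at heq
  exact mul_right_cancel₀ (hΦ0 _ (hre z₂ hz₂)) heq

/-- On `[0, π]`, `gapProfile (cos s) = (2 + cos s) * exp ((2 * s + sin s) * I)`, which is the
derivative of `-I * exp ((2 * s + sin s) * I)`; hence `gapProfile ∘ cos` has mean zero. -/
noncomputable def gapProfile (c : ℝ) : ℂ :=
  (2 + c : ℝ) * exp ((2 * Real.arccos c + √(1 - c ^ 2) : ℝ) * I)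

@[fun_prop]
theorem continuous_gapProfile : Continuous gapProfile := by
  unfold gapProfile; fun_prop

theorem norm_gapProfile {c : ℝ} (hc : c ∈ Icc (-1) 1) : ‖gapProfile c‖ = 2 + c := by
  rw [gapProfile, norm_mul, norm_exp_ofReal_mul_I, mul_one, norm_real, Real.norm_eq_abs,
    abs_of_pos (by linarith [hc.1])]

theorem injOn_norm_gapProfile : InjOn (‖gapProfile ·‖) (Icc (-1) 1) := fun c₁ hc₁ c₂ hc₂ h => by
  simpa [norm_gapProfile hc₁, norm_gapProfile hc₂] using h

theorem gapProfile_ne_zero {c : ℝ} (hc : c ∈ Icc (-1) 1) : gapProfile c ≠ 0 := by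
  rw [← norm_ne_zero_iff, norm_gapProfile hc]
  linarith [hc.1]

theorem gapProfile_cos {s : ℝ} (hs : s ∈ Icc 0 π) :
    gapProfile (Real.cos s) = (2 + Real.cos s : ℝ) * exp ((2 * s + Real.sin s : ℝ) * I) := by
  rw [gapProfile, Real.arccos_cos hs.1 hs.2, ← Real.sin_sq,
    Real.sqrt_sq (Real.sin_nonneg_of_nonneg_of_le_pi hs.1 hs.2)]

theorem integral_gapProfile_cos : ∫ s in 0..2 * π, gapProfile (Real.cos s) = 0 := by
  rw [integral_comp_cos_eq_two_smul continuous_gapProfile,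
    integral_congr fun s hs => gapProfile_cos (uIcc_of_le Real.pi_pos.le ▸ hs)]
  have hderiv : ∀ s : ℝ, HasDerivAt (fun t : ℝ => -I * exp ((2 * t + Real.sin t : ℝ) * I))
      ((2 + Real.cos s : ℝ) * exp ((2 * s + Real.sin s : ℝ) * I)) s := fun s => by
    have hphase : HasDerivAt (fun t : ℝ => 2 * t + Real.sin t) (2 + Real.cos s) s :=
      (((hasDerivAt_id' s).const_mul 2).add (Real.hasDerivAt_sin s)).congr_deriv (by ring)
    refine ((hphase.ofReal_comp.mul_const I).cexp.const_mul (-I)).congr_deriv ?_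
    push_cast
    linear_combination -((2 + cos (s : ℂ)) * cexp ((2 * s + sin (s : ℂ)) * I)) * I_sq
  rw [integral_eq_sub_of_hasDerivAt (fun s _ => hderiv s)
    (Continuous.intervalIntegrable (by fun_prop) _ _)]
  simp only [mul_zero, Real.sin_zero, Real.sin_pi, add_zero, ofReal_zero, zero_mul, exp_zero]
  push_cast
  rw [exp_two_pi_mul_I]
  simp

/-- for every `N` there is an embedding of the circle into `ℂ` whose
Fourier coefficients vanish for all `|n| ≤ N`. -/
theorem exists_embedding_with_long_fourier_gap (N : ℕ) :
    ∃ f : ℂ → ℂ,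
      ContinuousOn f (Metric.sphere (0 : ℂ) 1) ∧
      Set.InjOn f (Metric.sphere (0 : ℂ) 1) ∧
      ∀ n : ℤ, |n| ≤ (N : ℤ) → fCoeff f n = 0 := by
  refine ⟨fun z => z * gapProfile ((z ^ (N + 2)).re), ?_,
    injOn_mul_comp_re_pow injOn_norm_gapProfile (fun _ => gapProfile_ne_zero) (N + 2),
    fun n hn => fCoeff_mul_comp_re_pow_eq_zero continuous_gapProfile integral_gapProfile_cos ?_⟩
  · fun_prop
  · push_cast
    linarith [abs_sub n 1, abs_one (α := ℤ)]
end

section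
/- Let f : 𝕋 → ℂ be a continuous injective map whose image is horizontally convex, in the equivalent sense that there exist θ₁ < θ₂ < θ₁ + 2π such that the function θ ↦ Im f(e^{iθ}) is monotone on [θ₁, θ₂] and monotone on [θ₂, θ₁ + 2π]. Then |f̂(−1)| + |f̂(1)| > 0. -/
/-!
If `f̂(1) = f̂(-1) = 0`, then `g θ = Im f(e^{iθ})` is orthogonal to every `sin (θ - φ)`.
When `g` increases on `[θ₁, θ₂]` and decreases on `[θ₂, θ₁ + 2π]`, take `m` the midpoint of
`[θ₁, θ₂]`: `sin (θ - m)` changes sign exactly at `m` and `m + π`, and its integral vanishes on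
both arcs, so `(g θ - g m) sin (θ - m)` on the first arc and `(g (m + π) - g θ) sin (θ - m)` on the
second are nonnegative with total integral `0`. Hence `g` is constant (when both arcs have the same
monotonicity this already follows from periodicity). Then `Re f(e^{iθ})` would be a continuous
injective map from the circle to `ℝ`, which the intermediate value theorem rules out.
-/

open Complex MeasureTheory intervalIntegral

/-- A function is monotone on a set if it is monotone nondecreasing or nonincreasing. -/
def MonotoneOnEither (g : ℝ → ℝ) (s : Set ℝ) : Prop :=
  MonotoneOn g s ∨ AntitoneOn g s

open Set Real

lemma eqOn_zero_of_integral_eq_zero {h : ℝ → ℝ} {a b : ℝ} (hab : a < b) (hc : Continuous h)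
    (hnn : ∀ x ∈ Icc a b, 0 ≤ h x) (hz : ∫ x in a..b, h x = 0) : EqOn h 0 (Icc a b) := by
  have hae : h =ᵐ[volume.restrict (Ioc a b)] 0 := by
    refine (integral_eq_zero_iff_of_le_of_nonneg_ae hab.le ?_ (hc.intervalIntegrable a b)).1 hz
    exact (ae_restrict_iff' measurableSet_Ioc).2
      (.of_forall fun x hx => hnn x (Ioc_subset_Icc_self hx))
  refine Measure.eqOn_Icc_of_ae_eq volume hab.ne ?_ hc.continuousOn continuousOn_const
  rwa [Measure.restrict_congr_set Ioc_ae_eq_Icc.symm]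

lemma Function.Periodic.not_injOn_Ico {h : ℝ → ℝ} {T : ℝ} (hc : Continuous h)
    (hper : Function.Periodic h T) (hT : 0 < T) (a : ℝ) : ¬ InjOn h (Ico a (a + T)) := by
  intro hinj
  have hmid : a + T / 2 ∈ Ico a (a + T) := ⟨by linarith, by linarith⟩
  wlog hlt : h a < h (a + T / 2) generalizing h
  · have hne : h (a + T / 2) ≠ h a := fun heq => by
      linarith [hinj hmid ⟨le_rfl, by linarith⟩ heq]
    exact this hc.neg (hper.comp _) (fun s hs t ht hst => hinj hs ht (neg_inj.1 hst))
      (neg_lt_neg ((not_lt.1 hlt).lt_of_ne hne))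
  obtain ⟨s, hs, hsv⟩ := intermediate_value_Ioo (by linarith) hc.continuousOn
    (show (h a + h (a + T / 2)) / 2 ∈ Ioo (h a) (h (a + T / 2)) from ⟨by linarith, by linarith⟩)
  obtain ⟨t, ht, htv⟩ := intermediate_value_Ioo' (by linarith) hc.continuousOn
    (show (h a + h (a + T / 2)) / 2 ∈ Ioo (h (a + T)) (h (a + T / 2)) by
      rw [hper a]; exact ⟨by linarith, by linarith⟩)
  have hst := hinj ⟨hs.1.le, by linarith [hs.2]⟩ ⟨by linarith [ht.1], ht.2⟩ (hsv.trans htv.symm)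
  linarith [hs.2, ht.1]

lemma integral_sub_mul_sin_sub_midpoint {g : ℝ → ℝ} (hc : Continuous g) (a b c : ℝ) :
    ∫ θ in a..b, (g θ - c) * Real.sin (θ - (a + b) / 2) =
      ∫ θ in a..b, g θ * Real.sin (θ - (a + b) / 2) := by
  have hsin : ∫ θ in a..b, Real.sin (θ - (a + b) / 2) = 0 := by
    rw [integral_comp_sub_right (fun θ => Real.sin θ), integral_sin, ← Real.cos_neg (a - _)]
    ring_nf
  simp_rw [sub_mul]
  rw [intervalIntegral.integral_sub (by apply Continuous.intervalIntegrable; fun_prop)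
    (by apply Continuous.intervalIntegrable; fun_prop), intervalIntegral.integral_const_mul, hsin,
    mul_zero, sub_zero]

section SignChange

variable {g : ℝ → ℝ} {a b c m : ℝ}

lemma MonotoneOn.sub_mul_sin_nonneg (hg : MonotoneOn g (Icc a b)) (hm : m ∈ Icc a b)
    (ha : m - π ≤ a) (hb : b ≤ m + π) : ∀ θ ∈ Icc a b, 0 ≤ (g θ - g m) * Real.sin (θ - m) := by
  intro θ hθ
  rcases le_total θ m with hθm | hθm
  · exact mul_nonneg_of_nonpos_of_nonpos (sub_nonpos.2 (hg hθ hm hθm))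
      (sin_nonpos_of_nonpos_of_neg_pi_le (by linarith) (by linarith [hθ.1]))
  · exact mul_nonneg (sub_nonneg.2 (hg hm hθ hθm))
      (sin_nonneg_of_nonneg_of_le_pi (by linarith) (by linarith [hθ.2]))

lemma MonotoneOn.eqOn_of_integral_sub_mul_sin_eq_zero (hc : Continuous g)
    (hg : MonotoneOn g (Icc a b)) (hab : a < b) (hm : m ∈ Icc a b) (ha : m - π < a)
    (hb : b < m + π) (hint : ∫ θ in a..b, (g θ - g m) * Real.sin (θ - m) = 0) :
    EqOn g (fun _ => g m) (Icc a b) := by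
  intro θ hθ
  have hzero := eqOn_zero_of_integral_eq_zero hab (by fun_prop)
    (hg.sub_mul_sin_nonneg hm ha.le hb.le) hint hθ
  rcases mul_eq_zero.1 hzero with h | h
  · exact sub_eq_zero.1 h
  · rw [sin_eq_zero_iff_of_lt_of_lt (by linarith [hθ.1]) (by linarith [hθ.2]), sub_eq_zero] at h
    rw [h]

lemma eqOn_of_monotoneOn_of_antitoneOn (hc : Continuous g) (hab : a < b) (hb : b < a + 2 * π)
    (hmono : MonotoneOn g (Icc a b)) (hanti : AntitoneOn g (Icc b (a + 2 * π)))
    (hint : ∫ θ in a..a + 2 * π, g θ * Real.sin (θ - (a + b) / 2) = 0) :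
    EqOn g (fun _ => g b) (Icc a (a + 2 * π)) := by
  set m := (a + b) / 2 with hm
  set m' := (b + (a + 2 * π)) / 2 with hm'
  have hsin' : ∀ θ, Real.sin (θ - m') = -Real.sin (θ - m) := fun θ => by
    rw [← Real.sin_sub_pi, hm, hm']; ring_nf
  have hI₁ : ∫ θ in a..b, (g θ - g m) * Real.sin (θ - m) = ∫ θ in a..b, g θ * Real.sin (θ - m) :=
    integral_sub_mul_sin_sub_midpoint hc a b _
  have hI₂ : ∫ θ in b..a + 2 * π, (-g θ - -g m') * Real.sin (θ - m') =
      ∫ θ in b..a + 2 * π, g θ * Real.sin (θ - m) := by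
    have := integral_sub_mul_sin_sub_midpoint hc.neg b (a + 2 * π) (-g m')
    simpa only [← hm', Pi.neg_apply, hsin', neg_mul_neg] using this
  have hmem : m ∈ Icc a b := ⟨by linarith, by linarith⟩
  have hmem' : m' ∈ Icc b (a + 2 * π) := ⟨by linarith, by linarith⟩
  have hpos₁ := hmono.sub_mul_sin_nonneg hmem (by linarith) (by linarith)
  have hmono' : MonotoneOn (fun θ => -g θ) (Icc b (a + 2 * π)) := hanti.neg
  have hpos₂ := hmono'.sub_mul_sin_nonneg hmem' (by linarith) (by linarith)
  have hsum : (∫ θ in a..b, g θ * Real.sin (θ - m)) +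
      ∫ θ in b..a + 2 * π, g θ * Real.sin (θ - m) = 0 := by
    rwa [integral_add_adjacent_intervals (by apply Continuous.intervalIntegrable; fun_prop)
      (by apply Continuous.intervalIntegrable; fun_prop)]
  have hnonneg₁ := integral_nonneg (μ := volume) hab.le hpos₁
  have hnonneg₂ := integral_nonneg (μ := volume) hb.le hpos₂
  have heq₁ := hmono.eqOn_of_integral_sub_mul_sin_eq_zero hc hab hmem (by linarith) (by linarith)
    (by linarith)
  have heq₂ := hmono'.eqOn_of_integral_sub_mul_sin_eq_zero (by fun_prop) hb hmem' (by linarith)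
    (by linarith) (by linarith)
  intro θ hθ
  rcases le_total θ b with hθb | hθb
  · exact (heq₁ ⟨hθ.1, hθb⟩).trans (heq₁ ⟨hab.le, le_rfl⟩).symm
  · exact neg_inj.1 ((heq₂ ⟨hθb, hθ.2⟩).trans (heq₂ ⟨le_rfl, hb.le⟩).symm)

lemma MonotoneOnEither.neg {g : ℝ → ℝ} {s : Set ℝ} (hg : MonotoneOnEither g s) :
    MonotoneOnEither (fun x => -g x) s :=
  hg.symm.imp AntitoneOn.neg MonotoneOn.neg

lemma eqOn_of_monotoneOn_of_monotoneOn (hab : a ≤ b) (hbc : b ≤ c)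
    (h₁ : MonotoneOn g (Icc a b)) (h₂ : MonotoneOn g (Icc b c)) (hca : g c = g a) :
    EqOn g (fun _ => g a) (Icc a c) := by
  have hmono : MonotoneOn g (Icc a c) := by
    rw [← Icc_union_Icc_eq_Icc hab hbc]
    exact h₁.union_right h₂ (isGreatest_Icc hab) (isLeast_Icc hbc)
  intro θ hθ
  have hac : a ≤ c := hab.trans hbc
  exact le_antisymm (hca ▸ hmono hθ ⟨hac, le_rfl⟩ hθ.2) (hmono ⟨le_rfl, hac⟩ hθ hθ.1)

lemma exists_eqOn_const_of_monotoneOnEither (hc : Continuous g) (hper : g (a + 2 * π) = g a)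
    (hab : a < b) (hb : b < a + 2 * π) (h₁ : MonotoneOnEither g (Icc a b))
    (h₂ : MonotoneOnEither g (Icc b (a + 2 * π)))
    (hint : ∫ θ in a..a + 2 * π, g θ * Real.sin (θ - (a + b) / 2) = 0) :
    ∃ C, EqOn g (fun _ => C) (Icc a (a + 2 * π)) := by
  wlog hmono : MonotoneOn g (Icc a b) generalizing g
  · have hanti : AntitoneOn g (Icc a b) := h₁.resolve_left hmono
    obtain ⟨C, hC⟩ := this (g := fun θ => -g θ) (by fun_prop) (by rw [hper]) h₁.neg h₂.neg
      (by simp only [neg_mul, intervalIntegral.integral_neg, hint, neg_zero]) hanti.neg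
    exact ⟨-C, fun θ hθ => by simp [← hC hθ]⟩
  rcases h₂ with h₂ | h₂
  · exact ⟨g a, eqOn_of_monotoneOn_of_monotoneOn hab.le hb.le hmono h₂ hper⟩
  · exact ⟨g b, eqOn_of_monotoneOn_of_antitoneOn hc hab hb hmono h₂ hint⟩

end SignChange

section CircleParametrization

variable {f : ℂ → ℂ}

lemma continuous_comp_exp_mul_I (hf : ContinuousOn f (Metric.sphere 0 1)) :
    Continuous fun θ : ℝ => f (cexp (θ * I)) :=
  hf.comp_continuous (by fun_prop) fun θ => by simp

lemma periodic_comp_exp_mul_I (f : ℂ → ℂ) :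
    Function.Periodic (fun θ : ℝ => f (cexp (θ * I))) (2 * π) := fun θ => by
  simp only [ofReal_add, ofReal_mul, ofReal_ofNat, exp_mul_I_periodic θ]

lemma injOn_exp_mul_I_Ico (a : ℝ) : InjOn (fun t : ℝ => cexp (t * I)) (Ico a (a + 2 * π)) :=
  Subtype.val_injective.comp_injOn (Circle.exp_injOn_Ico (by linarith))

lemma fCoeff_eq_zero_iff (f : ℂ → ℂ) (n : ℤ) : fCoeff f n = 0 ↔
    ∫ θ in (0:ℝ)..2 * π, f (cexp (θ * I)) * cexp (-(n : ℂ) * θ * I) = 0 := by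
  simp [fCoeff, Real.pi_ne_zero]

lemma integral_im_mul_sin_eq_zero (hf : ContinuousOn f (Metric.sphere 0 1))
    (h₁ : fCoeff f 1 = 0) (hneg : fCoeff f (-1) = 0) (a φ : ℝ) :
    ∫ θ in a..a + 2 * π, (f (cexp (θ * I))).im * Real.sin (θ - φ) = 0 := by
  set F := fun θ : ℝ => f (cexp (θ * I))
  have hF : Continuous F := continuous_comp_exp_mul_I hf
  -- `Im z * Im w = (Re (z * conj w) - Re (z * w)) / 2` with `w = exp (i (θ - φ))`
  have hpointwise : ∀ θ : ℝ, (F θ).im * Real.sin (θ - φ) =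
      ((cexp (φ * I) * (F θ * cexp (-((1 : ℤ) : ℂ) * θ * I)) -
        cexp (-φ * I) * (F θ * cexp (-((-1 : ℤ) : ℂ) * θ * I))) / 2).re := fun θ => by
    simp only [Real.sin_sub, Int.cast_one, neg_mul, one_mul, Int.reduceNeg, Int.cast_neg, neg_neg,
      div_ofNat_re, sub_re, mul_re, exp_re, ofReal_re, I_re, mul_zero, ofReal_im, I_im, mul_one,
      sub_self, Real.exp_zero, mul_im, add_zero, neg_re, neg_zero, neg_im, Real.cos_neg, exp_im,
      Real.sin_neg, mul_neg, sub_neg_eq_add]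
    ring
  have hperiodic : Function.Periodic (fun θ => (F θ).im * Real.sin (θ - φ)) (2 * π) :=
    ((periodic_comp_exp_mul_I f).comp im).mul (Real.sin_periodic.sub_const φ)
  have hint : ∀ n : ℤ,
      IntervalIntegrable (fun θ : ℝ => F θ * cexp (-(n : ℂ) * θ * I)) volume 0 (2 * π) :=
    fun n => Continuous.intervalIntegrable (by fun_prop) _ _
  rw [fCoeff_eq_zero_iff] at h₁ hneg
  rw [hperiodic.intervalIntegral_add_eq a 0, zero_add, integral_congr fun θ _ => hpointwise θ]
  simp_rw [← reCLM_apply]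
  rw [ContinuousLinearMap.intervalIntegral_comp_comm _
      ((((hint 1).const_mul _).sub ((hint (-1)).const_mul _)).div_const _),
    intervalIntegral.integral_div, intervalIntegral.integral_sub ((hint 1).const_mul _)
      ((hint (-1)).const_mul _), intervalIntegral.integral_const_mul,
    intervalIntegral.integral_const_mul, h₁, hneg]
  simp

end CircleParametrization

/-- a circle embedding with horizontally convex image has
`|f̂(−1)| + |f̂(1)| > 0`. -/
theorem horizontally_convex_nonvanishing
    (f : ℂ → ℂ)
    (hcont : ContinuousOn f (Metric.sphere (0 : ℂ) 1))
    (hinj : Set.InjOn f (Metric.sphere (0 : ℂ) 1))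
    (hconv : ∃ θ₁ θ₂ : ℝ, θ₁ < θ₂ ∧ θ₂ < θ₁ + 2 * Real.pi ∧
      MonotoneOnEither (fun θ => (f (Complex.exp (θ * Complex.I))).im) (Set.Icc θ₁ θ₂) ∧
      MonotoneOnEither (fun θ => (f (Complex.exp (θ * Complex.I))).im)
        (Set.Icc θ₂ (θ₁ + 2 * Real.pi))) :
    0 < ‖fCoeff f (-1)‖ + ‖fCoeff f 1‖ := by
  by_contra hcoeff
  have hnorm := norm_nonneg (fCoeff f (-1))
  have hnorm' := norm_nonneg (fCoeff f 1)
  have h₁ : fCoeff f 1 = 0 := norm_eq_zero.1 (by linarith)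
  have hneg : fCoeff f (-1) = 0 := norm_eq_zero.1 (by linarith)
  obtain ⟨θ₁, θ₂, h₁₂, h₂₁, hmono₁, hmono₂⟩ := hconv
  have hF := continuous_comp_exp_mul_I hcont
  have hper := periodic_comp_exp_mul_I f
  obtain ⟨C, hC⟩ := exists_eqOn_const_of_monotoneOnEither (continuous_im.comp hF)
    ((hper.comp im) θ₁) h₁₂ h₂₁ hmono₁ hmono₂ (integral_im_mul_sin_eq_zero hcont h₁ hneg θ₁ _)
  refine (hper.comp re).not_injOn_Ico (continuous_re.comp hF) two_pi_pos θ₁ fun s hs t ht hst => ?_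
  have him : (f (cexp (s * I))).im = (f (cexp (t * I))).im :=
    (hC (Ico_subset_Icc_self hs)).trans (hC (Ico_subset_Icc_self ht)).symm
  exact injOn_exp_mul_I_Ico θ₁ hs ht (hinj (by simp) (by simp) (Complex.ext hst him))
end
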